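/- arXiv:math/0003163 — 2 statements merged into one kernel-verified Lean document; each statement's English description precedes it below -/
import Mathlib

section
/- Let t be a positive integer and Λ a finite nonempty alphabet. Suppose the space V_∞(t,Λ) is covered by finitely many Borel sets A_1,…,A_r. Then there exist pairwise disjoint finite subsets w_0, w_1, w_2, … of ℕ, each with at least t elements and with max(w_ℓ) < min(w_{ℓ+1}) for every ℓ, and, with W = ⋃_ℓ w_ℓ, a function ρ : {u ∈ M_∞(t) : u ⊈ W} → Λ, such that for some i ∈ {1,…,r} every point ν_ϱ belongs to A_i, where ϱ ranges over all functions from T_∞(t) to Λ and ν_ϱ(u) = ρ(u) if u ⊈ W, ν_ϱ(u) = ϱ(ℓ ↦ |u ∩ w_ℓ|) if u ⊆ W. -/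
/-- `IdxI t` is M_∞(t): the set of nonempty finite subsets of ℕ with at most t elements. -/
abbrev IdxI (t : ℕ) : Type := {u : Finset ℕ // u.Nonempty ∧ u.card ≤ t}


namespace S5

variable {Λ : Type}

/-- Block `ℓ` determined by left endpoints `M`. -/
def blkP (t : ℕ) (M : ℕ → ℕ) (ℓ : ℕ) : Finset ℕ := Finset.Ico (M ℓ) (M ℓ + t)

/-- Union of the first `n` blocks. -/
def BUs (t n : ℕ) (M : ℕ → ℕ) : Set ℕ := ⋃ ℓ < n, (blkP t M ℓ : Set ℕ)

/-- Finitized profile of `u` with respect to the first `n` blocks. -/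
def profq (t n : ℕ) (M : ℕ → ℕ) (u : IdxI t) : Fin n → Fin (t + 1) :=
  fun ℓ => ⟨min t ((u.1 ∩ blkP t M ℓ).card), Nat.lt_succ_of_le (min_le_left _ _)⟩

open Classical in
/-- The point of the space determined by pattern `q` on block-contained coordinates
and by `h` elsewhere. -/
noncomputable def valq (t n : ℕ) (M : ℕ → ℕ) (q : (Fin n → Fin (t + 1)) → Λ)
    (h : IdxI t → Λ) : IdxI t → Λ :=
  fun u => if (↑u.1 : Set ℕ) ⊆ BUs t n M then q (profq t n M u) else h u

lemma valq_pos {t n : ℕ} {M : ℕ → ℕ} {q : (Fin n → Fin (t + 1)) → Λ} {h : IdxI t → Λ}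
    {u : IdxI t} (hu : (↑u.1 : Set ℕ) ⊆ BUs t n M) :
    valq t n M q h u = q (profq t n M u) := by
  simp only [valq, hu, if_pos]

lemma valq_neg {t n : ℕ} {M : ℕ → ℕ} {q : (Fin n → Fin (t + 1)) → Λ} {h : IdxI t → Λ}
    {u : IdxI t} (hu : ¬ (↑u.1 : Set ℕ) ⊆ BUs t n M) :
    valq t n M q h u = h u := by
  simp only [valq, hu, if_neg, if_false]

lemma BUs_congr {t n : ℕ} {M M' : ℕ → ℕ} (h : ∀ ℓ < n, M ℓ = M' ℓ) :
    BUs t n M = BUs t n M' := by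
  unfold BUs
  refine Set.iUnion₂_congr fun ℓ hℓ => ?_
  rw [blkP, blkP, h ℓ hℓ]

lemma valq_congrM {t n : ℕ} {M M' : ℕ → ℕ} (h : ∀ ℓ < n, M ℓ = M' ℓ)
    (q : (Fin n → Fin (t + 1)) → Λ) (hh : IdxI t → Λ) :
    valq t n M q hh = valq t n M' q hh := by
  funext u
  have hBU := BUs_congr (t := t) h
  have hprof : profq t n M u = profq t n M' u := by
    funext ℓ
    simp only [profq, blkP, h ℓ ℓ.isLt]
  by_cases hc : (↑u.1 : Set ℕ) ⊆ BUs t n M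
  · rw [valq_pos hc, valq_pos (hBU ▸ hc), hprof]
  · rw [valq_neg hc, valq_neg (fun hc' => hc (hBU ▸ hc'))]

lemma finite_cyl (t b : ℕ) : {u : IdxI t | (↑u.1 : Set ℕ) ⊆ Set.Iio b}.Finite := by
  have hsub : {u : IdxI t | (↑u.1 : Set ℕ) ⊆ Set.Iio b} ⊆
      Subtype.val ⁻¹' (↑((Finset.range b).powerset) : Set (Finset ℕ)) := by
    intro u hu
    simp only [Set.mem_preimage, Finset.coe_powerset, Set.mem_preimage, Set.mem_powerset_iff]
    intro x hx
    simp only [Finset.coe_range, Set.mem_Iio]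
    exact hu hx
  exact Set.Finite.subset (Set.Finite.preimage (Set.injOn_of_injective Subtype.val_injective)
    ((Finset.range b).powerset.finite_toSet)) hsub

lemma isOpen_cyl [TopologicalSpace Λ] [DiscreteTopology Λ] (t b : ℕ) (c : IdxI t → Λ) :
    IsOpen {z : IdxI t → Λ | ∀ u : IdxI t, (↑u.1 : Set ℕ) ⊆ Set.Iio b → z u = c u} := by
  have : {z : IdxI t → Λ | ∀ u : IdxI t, (↑u.1 : Set ℕ) ⊆ Set.Iio b → z u = c u} =
      ⋂ u ∈ {u : IdxI t | (↑u.1 : Set ℕ) ⊆ Set.Iio b}, {z : IdxI t → Λ | z u = c u} := by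
    ext z; simp [Set.mem_iInter]
  rw [this]
  refine (finite_cyl t b).isOpen_biInter fun u _ => ?_
  have : {z : IdxI t → Λ | z u = c u} = (fun z : IdxI t → Λ => z u) ⁻¹' {c u} := by
    ext z; simp
  rw [this]
  exact (continuous_apply u).isOpen_preimage _ (isOpen_discrete _)

lemma mem_BUs {t n : ℕ} {M : ℕ → ℕ} {x : ℕ} :
    x ∈ BUs t n M ↔ ∃ ℓ < n, x ∈ blkP t M ℓ := by
  simp [BUs]

/-- One-stage density absorption. -/
lemma absorb [TopologicalSpace Λ] [DiscreteTopology Λ] [Fintype Λ]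
    (t n : ℕ) (M : ℕ → ℕ) (a : ℕ) (D : Set (IdxI t → Λ))
    (hDd : Dense D) (hDo : IsOpen D) (h : IdxI t → Λ) :
    ∃ b : ℕ, a ≤ b ∧ ∃ h' : IdxI t → Λ,
      (∀ u : IdxI t, (↑u.1 : Set ℕ) ⊆ Set.Iio a → h' u = h u) ∧
      (∀ (q : (Fin n → Fin (t + 1)) → Λ) (z : IdxI t → Λ),
        (∀ u : IdxI t, (↑u.1 : Set ℕ) ⊆ Set.Iio b → z u = valq t n M q h' u) → z ∈ D) := by
  classical
  set a₁ : ℕ := max a ((Finset.range n).sup fun ℓ => M ℓ + t) with ha₁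
  have ha : a ≤ a₁ := le_max_left _ _
  have hBU : BUs t n M ⊆ Set.Iio a₁ := by
    intro x hx
    obtain ⟨ℓ, hℓ, hxb⟩ := mem_BUs.mp hx
    have h1 : x < M ℓ + t := (Finset.mem_Ico.mp hxb).2
    have h2 : M ℓ + t ≤ (Finset.range n).sup fun ℓ => M ℓ + t :=
      Finset.le_sup (f := fun ℓ => M ℓ + t) (Finset.mem_range.mpr hℓ)
    exact Set.mem_Iio.mpr (lt_of_lt_of_le h1 (h2.trans (le_max_right _ _)))
  have main : ∀ Qs : Finset ((Fin n → Fin (t + 1)) → Λ),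
      ∃ b : ℕ, a₁ ≤ b ∧ ∃ h' : IdxI t → Λ,
        (∀ u : IdxI t, (↑u.1 : Set ℕ) ⊆ Set.Iio a₁ → h' u = h u) ∧
        ∀ q ∈ Qs, ∀ z : IdxI t → Λ,
          (∀ u : IdxI t, (↑u.1 : Set ℕ) ⊆ Set.Iio b → z u = valq t n M q h' u) → z ∈ D := by
    intro Qs
    induction Qs using Finset.induction_on with
    | empty =>
      exact ⟨a₁, le_rfl, h, fun _ _ => rfl, fun q hq => absurd hq (Finset.notMem_empty q)⟩
    | @insert q₀ Qs hq₀ ih =>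
      obtain ⟨b₁, hab₁, h₁, hfr₁, hg₁⟩ := ih
      set v₀ : IdxI t → Λ := valq t n M q₀ h₁ with hv₀
      have hCne : (({z : IdxI t → Λ | ∀ u : IdxI t, (↑u.1 : Set ℕ) ⊆ Set.Iio b₁ → z u = v₀ u})
          : Set (IdxI t → Λ)).Nonempty := ⟨v₀, fun _ _ => rfl⟩
      obtain ⟨y, hyC, hyD⟩ := hDd.inter_open_nonempty _ (isOpen_cyl t b₁ v₀) hCne
      have hyC' : ∀ u : IdxI t, (↑u.1 : Set ℕ) ⊆ Set.Iio b₁ → y u = v₀ u := hyC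
      obtain ⟨I, us, hIu, hpi⟩ := isOpen_pi_iff.mp hDo y hyD
      set b₂ : ℕ := max b₁ ((I.sup fun u : IdxI t => u.1.sup id) + 1) with hb₂
      have hb₁₂ : b₁ ≤ b₂ := le_max_left _ _
      have hIb : ∀ v : IdxI t, v ∈ I → (↑v.1 : Set ℕ) ⊆ Set.Iio b₂ := by
        intro v hv x hx
        have hx' : x ∈ v.1 := hx
        have : x ≤ v.1.sup id := Finset.le_sup (f := id) hx'
        have : x ≤ I.sup fun u : IdxI t => u.1.sup id :=
          this.trans (Finset.le_sup (f := fun u : IdxI t => u.1.sup id) hv)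
        exact Set.mem_Iio.mpr (lt_of_le_of_lt this
          (lt_of_lt_of_le (Nat.lt_succ_self _) (le_max_right _ _)))
      set h₂ : IdxI t → Λ := fun u => if (↑u.1 : Set ℕ) ⊆ BUs t n M then h₁ u else y u with hh₂
      have hfr₂ : ∀ u : IdxI t, (↑u.1 : Set ℕ) ⊆ Set.Iio b₁ → h₂ u = h₁ u := by
        intro u hu
        by_cases hb : (↑u.1 : Set ℕ) ⊆ BUs t n M
        · simp only [hh₂, hb, if_pos]
        · simp only [hh₂, hb, if_neg, if_false]
          rw [hyC' u hu, hv₀, valq_neg hb]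
      have hval₂ : ∀ (q : (Fin n → Fin (t + 1)) → Λ) (u : IdxI t),
          (↑u.1 : Set ℕ) ⊆ Set.Iio b₁ → valq t n M q h₂ u = valq t n M q h₁ u := by
        intro q u hu
        by_cases hb : (↑u.1 : Set ℕ) ⊆ BUs t n M
        · rw [valq_pos hb, valq_pos hb]
        · rw [valq_neg hb, valq_neg hb, hfr₂ u hu]
      refine ⟨b₂, hab₁.trans hb₁₂, h₂, ?_, ?_⟩
      · intro u hu
        have hu' : (↑u.1 : Set ℕ) ⊆ Set.Iio b₁ := hu.trans (Set.Iio_subset_Iio hab₁)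
        rw [hfr₂ u hu', hfr₁ u hu]
      · intro q hq z hz
        rcases Finset.mem_insert.mp hq with hq | hq
        · subst hq
          apply hpi
          rw [Set.mem_pi]
          intro v hv
          have hv' : v ∈ I := hv
          have hvb : (↑v.1 : Set ℕ) ⊆ Set.Iio b₂ := hIb v hv'
          have hzv := hz v hvb
          have hyv : valq t n M q h₂ v = y v := by
            by_cases hbv : (↑v.1 : Set ℕ) ⊆ BUs t n M
            · rw [valq_pos hbv]
              have : (↑v.1 : Set ℕ) ⊆ Set.Iio b₁ :=
                (hbv.trans hBU).trans (Set.Iio_subset_Iio hab₁)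
              rw [hyC' v this, hv₀, valq_pos hbv]
            · rw [valq_neg hbv]
              simp only [hh₂, hbv, if_neg, if_false]
          rw [hzv, hyv]
          exact (hIu v hv').2
        · refine hg₁ q hq z fun u hu => ?_
          rw [hz u (hu.trans (Set.Iio_subset_Iio hb₁₂)), hval₂ q u hu]
  obtain ⟨b, hab, h', hfr, hg⟩ := main Finset.univ
  exact ⟨b, ha.trans hab, h',
    fun u hu => hfr u (hu.trans (Set.Iio_subset_Iio ha)),
    fun q z hz => hg q (Finset.mem_univ q) z hz⟩

end S5


open Classical in
/-- The point ν_ϱ of the infinite-dimensional subspace datum (w,ρ):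
ν_ϱ(u) = ρ(u) if u ⊈ W, and ϱ(ℓ ↦ |u ∩ w_ℓ|) if u ⊆ W, where W = ⋃ ℓ, w ℓ. -/
noncomputable def infPoint (t : ℕ) {Λ : Type} (w : ℕ → Finset ℕ)
    (ρ : {u : IdxI t // ¬ (↑u.1 : Set ℕ) ⊆ ⋃ ℓ, (w ℓ : Set ℕ)} → Λ)
    (ϱ : (ℕ → ℕ) → Λ) : IdxI t → Λ :=
  fun u => if h : (↑u.1 : Set ℕ) ⊆ ⋃ ℓ, (w ℓ : Set ℕ) then ϱ (fun ℓ => (u.1 ∩ w ℓ).card)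
           else ρ ⟨u, h⟩

theorem statement5 (t : ℕ) (ht : 0 < t) (Λ : Type) [Fintype Λ] [Nonempty Λ]
    [TopologicalSpace Λ] [DiscreteTopology Λ]
    (r : ℕ) (A : Fin r → Set (IdxI t → Λ))
    (hBorel : ∀ i, @MeasurableSet _ (borel (IdxI t → Λ)) (A i))
    (hcover : ∀ x : IdxI t → Λ, ∃ i, x ∈ A i) :
    ∃ w : ℕ → Finset ℕ,
      (∀ ℓ, t ≤ (w ℓ).card) ∧
      (∀ ℓ ℓ' : ℕ, ℓ ≠ ℓ' → Disjoint (w ℓ) (w ℓ')) ∧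
      (∀ ℓ : ℕ, ∀ a ∈ w ℓ, ∀ b ∈ w (ℓ + 1), a < b) ∧
      ∃ ρ : {u : IdxI t // ¬ (↑u.1 : Set ℕ) ⊆ ⋃ ℓ, (w ℓ : Set ℕ)} → Λ,
      ∃ i : Fin r, ∀ ϱ : (ℕ → ℕ) → Λ, infPoint t w ρ ϱ ∈ A i := by
  classical
  letI : MeasurableSpace (IdxI t → Λ) := borel _
  haveI : BorelSpace (IdxI t → Λ) := ⟨rfl⟩
  -- Step A: find a color comeager in a basic cylinder
  have hBM : ∀ i, ∃ U : Set (IdxI t → Λ), IsOpen U ∧ (A i) =ᶠ[residual _] U := fun i =>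
    (MeasurableSet.baireMeasurableSet (hBorel i)).residualEq_isOpen
  choose U hUo hUe using hBM
  obtain ⟨i, x₀, hx₀⟩ : ∃ i, ∃ x, x ∈ U i := by
    by_contra hno
    push_neg at hno
    have hres : ∀ i, (A i)ᶜ ∈ residual (IdxI t → Λ) := by
      intro i
      have h1 : ∀ᶠ x in residual (IdxI t → Λ), x ∈ A i ↔ x ∈ U i :=
        Filter.eventuallyEq_set.mp (hUe i)
      refine Filter.mem_of_superset h1 ?_
      intro x hx
      simp only [Set.mem_setOf_eq] at hx
      intro hxA
      exact hno i x (hx.mp hxA)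
    have hinter : (⋂ i, (A i)ᶜ) ∈ residual (IdxI t → Λ) := countable_iInter_mem.mpr hres
    obtain ⟨x, hx⟩ := (dense_of_mem_residual hinter).nonempty
    simp only [Set.mem_iInter, Set.mem_compl_iff] at hx
    obtain ⟨j, hj⟩ := hcover x
    exact hx j hj
  have hE : {x : IdxI t → Λ | x ∈ A i ↔ x ∈ U i} ∈ residual (IdxI t → Λ) :=
    Filter.eventuallyEq_set.mp (hUe i)
  obtain ⟨S, hSo, hSd, hSc, hSsub⟩ := mem_residual_iff.mp hE
  obtain ⟨D, hD⟩ := Set.Countable.exists_eq_range (hSc.insert Set.univ)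
    (Set.insert_nonempty _ _)
  have hmemS' : ∀ n, D n ∈ insert Set.univ S := fun n => hD ▸ Set.mem_range_self n
  have hDo : ∀ n, IsOpen (D n) := by
    intro n
    rcases Set.mem_insert_iff.mp (hmemS' n) with h | h
    · rw [h]; exact isOpen_univ
    · exact hSo _ h
  have hDd : ∀ n, Dense (D n) := by
    intro n
    rcases Set.mem_insert_iff.mp (hmemS' n) with h | h
    · rw [h]; exact dense_univ
    · exact hSd _ h
  have hDsub : ∀ y : IdxI t → Λ, (∀ n, y ∈ D n) → (y ∈ A i ↔ y ∈ U i) := by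
    intro y hy
    apply hSsub
    intro s hs
    have hs' : s ∈ insert Set.univ S := Set.mem_insert_iff.mpr (Or.inr hs)
    rw [hD] at hs'
    obtain ⟨n, hn⟩ := hs'
    rw [← hn]
    exact hy n
  obtain ⟨F, us, hF1, hF2⟩ := isOpen_pi_iff.mp (hUo i) x₀ hx₀
  have hsub : ∀ y : IdxI t → Λ, (∀ u ∈ F, y u = x₀ u) → (∀ n, y ∈ D n) → y ∈ A i := by
    intro y h1 h2
    refine (hDsub y h2).mpr (hF2 ?_)
    rw [Set.mem_pi]
    intro v hv
    rw [h1 v hv]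
    exact (hF1 v hv).2
  -- Step B: fusion
  set a₀ : ℕ := (F.sup fun u : IdxI t => u.1.sup id) + 1 with ha₀
  have hstep : ∀ (n : ℕ) (s : ℕ × (ℕ → ℕ) × (IdxI t → Λ)),
      ∃ s' : ℕ × (ℕ → ℕ) × (IdxI t → Λ),
        s.1 ≤ s'.2.1 n ∧ s'.1 = s'.2.1 n + t ∧
        (∀ ℓ, ℓ ≠ n → s'.2.1 ℓ = s.2.1 ℓ) ∧
        (∀ u : IdxI t, (↑u.1 : Set ℕ) ⊆ Set.Iio s.1 → s'.2.2 u = s.2.2 u) ∧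
        (∀ (q : (Fin n → Fin (t + 1)) → Λ) (z : IdxI t → Λ),
          (∀ u : IdxI t, (↑u.1 : Set ℕ) ⊆ Set.Iio (s'.2.1 n) →
            z u = S5.valq t n s.2.1 q s'.2.2 u) → z ∈ D n) := by
    intro n s
    obtain ⟨b, hab, h', hfr, hg⟩ := S5.absorb t n s.2.1 s.1 (D n) (hDd n) (hDo n) s.2.2
    refine ⟨⟨b + t, Function.update s.2.1 n b, h'⟩, ?_, ?_, ?_, hfr, ?_⟩
    · simpa only [Function.update_self] using hab
    · simp only [Function.update_self]
    · intro ℓ hℓ; exact Function.update_of_ne hℓ _ _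
    · intro q z hz
      refine hg q z fun u hu => hz u ?_
      simpa only [Function.update_self] using hu
  choose f hf using hstep
  set st : ℕ → ℕ × (ℕ → ℕ) × (IdxI t → Λ) :=
    fun n => Nat.rec (motive := fun _ => ℕ × (ℕ → ℕ) × (IdxI t → Λ))
      (a₀, fun _ => 0, x₀) (fun k acc => f k acc) n with hst
  set Nf : ℕ → ℕ := fun ℓ => (st (ℓ + 1)).2.1 ℓ with hNf
  set bnd : ℕ → ℕ := fun m => (st m).1 with hbnd
  set hfun : ℕ → (IdxI t → Λ) := fun m => (st m).2.2 with hhfun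
  have H : ∀ n, bnd n ≤ Nf n ∧ bnd (n + 1) = Nf n + t ∧
      (∀ ℓ, ℓ ≠ n → (st (n + 1)).2.1 ℓ = (st n).2.1 ℓ) ∧
      (∀ u : IdxI t, (↑u.1 : Set ℕ) ⊆ Set.Iio (bnd n) → hfun (n + 1) u = hfun n u) ∧
      (∀ (q : (Fin n → Fin (t + 1)) → Λ) (z : IdxI t → Λ),
        (∀ u : IdxI t, (↑u.1 : Set ℕ) ⊆ Set.Iio (Nf n) →
          z u = S5.valq t n (st n).2.1 q (hfun (n + 1)) u) → z ∈ D n) :=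
    fun n => hf n (st n)
  have hb1 : ∀ n, bnd n ≤ Nf n := fun n => (H n).1
  have hb2 : ∀ n, bnd (n + 1) = Nf n + t := fun n => (H n).2.1
  have hbnd0 : bnd 0 = a₀ := rfl
  have hh0 : hfun 0 = x₀ := rfl
  have hMs : ∀ m ℓ, ℓ < m → (st m).2.1 ℓ = Nf ℓ := by
    intro m
    induction m with
    | zero => intro ℓ hℓ; omega
    | succ m ih =>
      intro ℓ hℓ
      rcases Nat.lt_succ_iff_lt_or_eq.mp hℓ with h | h
      · rw [(H m).2.2.1 ℓ (by omega), ih ℓ h]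
      · subst h; rfl
  have hNstep : ∀ ℓ, Nf ℓ + t ≤ Nf (ℓ + 1) := by
    intro ℓ
    have := hb1 (ℓ + 1)
    rw [hb2 ℓ] at this
    exact this
  have hNmono : ∀ ℓ ℓ', ℓ ≤ ℓ' → Nf ℓ ≤ Nf ℓ' := by
    intro ℓ ℓ' h
    induction ℓ', h using Nat.le_induction with
    | base => exact le_rfl
    | succ k hk ih => exact ih.trans (le_trans (Nat.le_add_right _ t) (hNstep k))
  have hNlt : ∀ ℓ ℓ', ℓ < ℓ' → Nf ℓ + t ≤ Nf ℓ' := by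
    intro ℓ ℓ' h
    exact (hNstep ℓ).trans (hNmono (ℓ + 1) ℓ' h)
  have hbmono : ∀ m m', m ≤ m' → bnd m ≤ bnd m' := by
    intro m m' h
    induction m', h using Nat.le_induction with
    | base => exact le_rfl
    | succ k hk ih =>
      refine ih.trans ?_
      rw [hb2 k]
      exact (hb1 k).trans (Nat.le_add_right _ t)
  have hgrow : ∀ m, m + a₀ ≤ bnd m := by
    intro m
    induction m with
    | zero => simp [hbnd0]
    | succ m ih =>
      have h1 := hb1 m
      have h2 := hb2 m
      omega
  have hfrz : ∀ m m', m ≤ m' → ∀ u : IdxI t,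
      (↑u.1 : Set ℕ) ⊆ Set.Iio (bnd m) → hfun m' u = hfun m u := by
    intro m m' h
    induction m', h using Nat.le_induction with
    | base => intro u _; rfl
    | succ k hk ih =>
      intro u hu
      rw [(H k).2.2.2.1 u (hu.trans (Set.Iio_subset_Iio (hbmono m k hk))), ih u hu]
  -- the blocks
  refine ⟨fun ℓ => S5.blkP t Nf ℓ, ?_, ?_, ?_, ?_⟩
  · intro ℓ
    simp [S5.blkP, Nat.card_Ico]
  · have haux : ∀ ℓ ℓ', ℓ < ℓ' → Disjoint (S5.blkP t Nf ℓ) (S5.blkP t Nf ℓ') := by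
      intro ℓ ℓ' h
      rw [Finset.disjoint_left]
      intro x hx hx'
      rw [S5.blkP, Finset.mem_Ico] at hx hx'
      have := hNlt ℓ ℓ' h
      omega
    intro ℓ ℓ' hne
    rcases lt_or_gt_of_ne hne with h | h
    · exact haux ℓ ℓ' h
    · exact (haux ℓ' ℓ h).symm
  · intro ℓ a ha b hb
    simp only [S5.blkP, Finset.mem_Ico] at ha hb
    have := hNstep ℓ
    omega
  · -- the key part
    have hwge : ∀ ℓ x, x ∈ S5.blkP t Nf ℓ → Nf ℓ ≤ x := by
      intro ℓ x hx
      exact (Finset.mem_Ico.mp hx).1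
    have hWge : ∀ x, x ∈ (⋃ ℓ, ((S5.blkP t Nf ℓ : Finset ℕ) : Set ℕ)) → Nf 0 ≤ x := by
      intro x hx
      obtain ⟨ℓ, hℓ⟩ := Set.mem_iUnion.mp hx
      exact (hNmono 0 ℓ (Nat.zero_le ℓ)).trans (hwge ℓ x hℓ)
    have hcoordbnd : ∀ u : IdxI t, (↑u.1 : Set ℕ) ⊆ Set.Iio (bnd (u.1.sup id + 1)) := by
      intro u x hx
      have h1 : x ≤ u.1.sup id := Finset.le_sup (f := id) hx
      have h2 := hgrow (u.1.sup id + 1)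
      exact Set.mem_Iio.mpr (by omega)
    set ρ : {u : IdxI t // ¬ (↑u.1 : Set ℕ) ⊆ ⋃ ℓ, ((S5.blkP t Nf ℓ : Finset ℕ) : Set ℕ)} → Λ :=
      fun p => hfun (p.1.1.sup id + 1) p.1 with hρ
    have hρfrz : ∀ (u : IdxI t) hnw m, (↑u.1 : Set ℕ) ⊆ Set.Iio (bnd m) →
        ρ ⟨u, hnw⟩ = hfun m u := by
      intro u hnw m hu
      have h1 := hfrz m (max m (u.1.sup id + 1)) (le_max_left _ _) u hu
      have h2 := hfrz (u.1.sup id + 1) (max m (u.1.sup id + 1)) (le_max_right _ _) u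
        (hcoordbnd u)
      rw [hρ]
      dsimp only
      rw [← h2, h1]
    refine ⟨ρ, i, ?_⟩
    intro ϱ
    refine hsub _ ?_ ?_
    · -- agreement with x₀ on F
      intro u hu
      have hnW : ¬ (↑u.1 : Set ℕ) ⊆ ⋃ ℓ, ((S5.blkP t Nf ℓ : Finset ℕ) : Set ℕ) := by
        obtain ⟨x, hx⟩ := u.2.1
        intro hcon
        have h1 : Nf 0 ≤ x := hWge x (hcon hx)
        have h2 : x ≤ u.1.sup id := Finset.le_sup (f := id) hx
        have h3 : u.1.sup id ≤ F.sup (fun u : IdxI t => u.1.sup id) :=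
          Finset.le_sup (f := fun u : IdxI t => u.1.sup id) hu
        have h4 := hb1 0
        have h5 := hgrow 0
        omega
      show infPoint t (fun ℓ => S5.blkP t Nf ℓ) ρ ϱ u = x₀ u
      rw [infPoint, dif_neg hnW]
      have h6 : (↑u.1 : Set ℕ) ⊆ Set.Iio (bnd 0) := by
        intro x hx
        have h2 : x ≤ u.1.sup id := Finset.le_sup (f := id) hx
        have h3 : u.1.sup id ≤ F.sup (fun u : IdxI t => u.1.sup id) :=
          Finset.le_sup (f := fun u : IdxI t => u.1.sup id) hu
        have h5 := hgrow 0
        exact Set.mem_Iio.mpr (by omega)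
      rw [hρfrz u hnW 0 h6, hh0]
    · -- membership in every D n
      intro n
      refine (H n).2.2.2.2
        (fun v : Fin n → Fin (t + 1) =>
          ϱ (fun ℓ => if hl : ℓ < n then (v ⟨ℓ, hl⟩ : ℕ) else 0)) _ ?_
      intro u hu
      rw [S5.valq_congrM (fun ℓ hℓ => hMs n ℓ hℓ)]
      by_cases hb : (↑u.1 : Set ℕ) ⊆ S5.BUs t n Nf
      · rw [S5.valq_pos hb]
        have hW : (↑u.1 : Set ℕ) ⊆ ⋃ ℓ, ((S5.blkP t Nf ℓ : Finset ℕ) : Set ℕ) := by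
          intro x hx
          obtain ⟨ℓ, _, hℓ⟩ := S5.mem_BUs.mp (hb hx)
          exact Set.mem_iUnion.mpr ⟨ℓ, hℓ⟩
        rw [infPoint, dif_pos hW]
        congr 1
        funext ℓ
        by_cases hl : ℓ < n
        · simp only [hl, dif_pos]
          rw [S5.profq]
          have hcard : (u.1 ∩ S5.blkP t Nf ℓ).card ≤ t :=
            le_trans (Finset.card_le_card Finset.inter_subset_left) u.2.2
          simp [min_eq_right hcard]
        · simp only [hl, dif_neg]
          have : u.1 ∩ S5.blkP t Nf ℓ = ∅ := by
            rw [Finset.eq_empty_iff_forall_notMem]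
            intro x hx
            have hx1 : x ∈ u.1 := Finset.mem_inter.mp hx |>.1
            have hx2 : Nf ℓ ≤ x := hwge ℓ x (Finset.mem_inter.mp hx |>.2)
            have hx3 : x < Nf n := hu hx1
            have hx4 : Nf n ≤ Nf ℓ := hNmono n ℓ (by omega)
            omega
          rw [this]
          simp
      · rw [S5.valq_neg hb]
        have hnW : ¬ (↑u.1 : Set ℕ) ⊆ ⋃ ℓ, ((S5.blkP t Nf ℓ : Finset ℕ) : Set ℕ) := by
          intro hcon
          apply hb
          intro x hx
          obtain ⟨ℓ, hℓ⟩ := Set.mem_iUnion.mp (hcon hx)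
          rcases lt_or_ge ℓ n with hln | hln
          · exact S5.mem_BUs.mpr ⟨ℓ, hln, hℓ⟩
          · exfalso
            have hx1 : Nf ℓ ≤ x := hwge ℓ x hℓ
            have hx2 : x < Nf n := hu hx
            have hx3 : Nf n ≤ Nf ℓ := hNmono n ℓ hln
            omega
        rw [infPoint, dif_neg hnW]
        refine hρfrz u hnW (n + 1) ?_
        refine hu.trans (Set.Iio_subset_Iio ?_)
        rw [hb2 n]
        omega
end

section
/- For all positive integers t, n, m* and c there exists a positive integer k such that: for every commutative ring R, every finite alphabet Λ with exactly n elements, every family (p_{α,j})_{α∈Λ, j<m*} of polynomials in R[X], each of degree at most t and with zero constant coefficient, all elements r_1,…,r_k ∈ R, and every c-colouring d of the set R^{m*} of m*-tuples of elements of R, there exist a tuple y = (y_0,…,y_{m*−1}) ∈ R^{m*} and a nonempty subset w ⊆ {1,…,k} such that, setting z = Σ_{ℓ∈w} r_ℓ, the value d((y_j + p_{α,j}(z))_{j<m*}) is the same for all α ∈ Λ. -/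
open Finset

section Tuples

variable {R : Type} [CommRing R] {M : Type} [AddCommGroup M] [Module R M] {t : ℕ}

/-- evaluation of a coefficient tuple: `P(z) = ∑_{s<t} z^(s+1) • a s`. -/
def evalT (a : Fin t → M) (z : R) : M := ∑ s : Fin t, z ^ ((s : ℕ) + 1) • a s

/-- coefficient tuple of the polynomial `x ↦ P_a (x + e) - P_a e - P_b x`. -/
def derT (a b : Fin t → M) (e : R) : Fin t → M := fun s =>
  (∑ s' : Fin t, if (s : ℕ) ≤ (s' : ℕ) then
      (((((s' : ℕ) + 1).choose ((s : ℕ) + 1) : ℕ) : R) * e ^ ((s' : ℕ) - (s : ℕ))) • a s'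
    else 0) - b s

theorem evalT_zero (a : Fin t → M) : evalT a (0 : R) = 0 := by
  unfold evalT
  refine Finset.sum_eq_zero fun s _ => ?_
  rw [zero_pow (Nat.succ_ne_zero _), zero_smul]

theorem evalT_eq_zero {a : Fin t → M} (h : ∀ s, a s = 0) (z : R) : evalT a z = 0 := by
  unfold evalT
  refine Finset.sum_eq_zero fun s _ => ?_
  rw [h s, smul_zero]

/-- the key binomial identity. -/
theorem ring_binom (x e : R) (n : ℕ) (hn : n < t) :
    (∑ s : Fin t, if (s : ℕ) ≤ n then
        x ^ ((s : ℕ) + 1) * ((((n + 1).choose ((s : ℕ) + 1) : ℕ) : R) * e ^ (n - (s : ℕ)))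
      else 0)
    = (x + e) ^ (n + 1) - e ^ (n + 1) := by
  have hpow : (x + e) ^ (n + 1) = ∑ k ∈ range (n + 2), x ^ k * e ^ (n + 1 - k) * ((n + 1).choose k : R) :=
    add_pow x e (n + 1)
  rw [Finset.sum_range_succ' (fun k => x ^ k * e ^ (n + 1 - k) * ((n + 1).choose k : R)) (n + 1)] at hpow
  simp only [pow_zero, Nat.choose_zero_right, Nat.cast_one, one_mul, mul_one, Nat.sub_zero] at hpow
  have hL : (∑ s : Fin t, if (s : ℕ) ≤ n then
        x ^ ((s : ℕ) + 1) * ((((n + 1).choose ((s : ℕ) + 1) : ℕ) : R) * e ^ (n - (s : ℕ)))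
      else 0)
      = ∑ k ∈ range (n + 1), x ^ (k + 1) * e ^ (n + 1 - (k + 1)) * ((n + 1).choose (k + 1) : R) := by
    rw [Fin.sum_univ_eq_sum_range (fun k => if k ≤ n then
        x ^ (k + 1) * ((((n + 1).choose (k + 1) : ℕ) : R) * e ^ (n - k)) else 0) t]
    rw [← Finset.sum_subset (Finset.range_subset_range.2 (Nat.succ_le_of_lt hn))]
    · refine Finset.sum_congr rfl fun k hk => ?_
      have hk' : k ≤ n := Nat.lt_succ_iff.mp (Finset.mem_range.mp hk)
      rw [if_pos hk']
      have : n + 1 - (k + 1) = n - k := by omega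
      rw [this]; ring
    · intro k _ hk
      have : ¬ k ≤ n := by
        intro h; exact hk (Finset.mem_range.2 (Nat.lt_succ_of_le h))
      rw [if_neg this]
  rw [hL, hpow]; ring

theorem evalT_derT (a b : Fin t → M) (e x : R) :
    evalT (derT a b e) x = evalT a (x + e) - evalT a e - evalT b x := by
  unfold evalT derT
  have h1 : ∑ s : Fin t, x ^ ((s : ℕ) + 1) •
      ((∑ s' : Fin t, if (s : ℕ) ≤ (s' : ℕ) then
          (((((s' : ℕ) + 1).choose ((s : ℕ) + 1) : ℕ) : R) * e ^ ((s' : ℕ) - (s : ℕ))) • a s'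
        else 0) - b s)
      = (∑ s : Fin t, x ^ ((s : ℕ) + 1) •
          (∑ s' : Fin t, if (s : ℕ) ≤ (s' : ℕ) then
            (((((s' : ℕ) + 1).choose ((s : ℕ) + 1) : ℕ) : R) * e ^ ((s' : ℕ) - (s : ℕ))) • a s'
          else 0))
        - ∑ s : Fin t, x ^ ((s : ℕ) + 1) • b s := by
    rw [← Finset.sum_sub_distrib]
    exact Finset.sum_congr rfl fun s _ => smul_sub _ _ _
  rw [h1]
  have h2 : (∑ s : Fin t, x ^ ((s : ℕ) + 1) •
      (∑ s' : Fin t, if (s : ℕ) ≤ (s' : ℕ) then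
        (((((s' : ℕ) + 1).choose ((s : ℕ) + 1) : ℕ) : R) * e ^ ((s' : ℕ) - (s : ℕ))) • a s'
      else 0))
      = ∑ s' : Fin t, ((x + e) ^ ((s' : ℕ) + 1) - e ^ ((s' : ℕ) + 1)) • a s' := by
    have h3 : ∀ s : Fin t, x ^ ((s : ℕ) + 1) •
        (∑ s' : Fin t, if (s : ℕ) ≤ (s' : ℕ) then
          (((((s' : ℕ) + 1).choose ((s : ℕ) + 1) : ℕ) : R) * e ^ ((s' : ℕ) - (s : ℕ))) • a s'
        else 0)
        = ∑ s' : Fin t, (if (s : ℕ) ≤ (s' : ℕ) then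
            (x ^ ((s : ℕ) + 1) * ((((s' : ℕ) + 1).choose ((s : ℕ) + 1) : ℕ) * e ^ ((s' : ℕ) - (s : ℕ)))) • a s'
          else 0) := by
      intro s
      rw [Finset.smul_sum]
      refine Finset.sum_congr rfl fun s' _ => ?_
      split_ifs with h
      · rw [smul_smul]
      · rw [smul_zero]
    rw [Finset.sum_congr rfl (fun s _ => h3 s)]
    rw [Finset.sum_comm]
    refine Finset.sum_congr rfl fun s' _ => ?_
    have h4 : (∑ s : Fin t, if (s : ℕ) ≤ (s' : ℕ) then
        (x ^ ((s : ℕ) + 1) * ((((s' : ℕ) + 1).choose ((s : ℕ) + 1) : ℕ) * e ^ ((s' : ℕ) - (s : ℕ)))) • a s'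
      else 0)
        = (∑ s : Fin t, if (s : ℕ) ≤ (s' : ℕ) then
            x ^ ((s : ℕ) + 1) * ((((s' : ℕ) + 1).choose ((s : ℕ) + 1) : ℕ) * e ^ ((s' : ℕ) - (s : ℕ)))
          else 0) • a s' := by
      rw [Finset.sum_smul]
      refine Finset.sum_congr rfl fun s _ => ?_
      split_ifs with h
      · rfl
      · rw [zero_smul]
    rw [h4, ring_binom x e (s' : ℕ) s'.isLt]
  rw [h2]
  have h5 : ∑ s' : Fin t, ((x + e) ^ ((s' : ℕ) + 1) - e ^ ((s' : ℕ) + 1)) • a s'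
      = (∑ s' : Fin t, (x + e) ^ ((s' : ℕ) + 1) • a s') - ∑ s' : Fin t, e ^ ((s' : ℕ) + 1) • a s' := by
    rw [← Finset.sum_sub_distrib]
    exact Finset.sum_congr rfl fun s _ => sub_smul _ _ _
  rw [h5]

end Tuples

section Deg

variable {R : Type} [CommRing R] {M : Type} [AddCommGroup M] [Module R M] {t : ℕ}

theorem derT_apply_top (a b : Fin t → M) (e : R) (s : Fin t)
    (ha : ∀ s' : Fin t, (s : ℕ) < (s' : ℕ) → a s' = 0) : derT a b e s = a s - b s := by
  unfold derT
  congr 1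
  rw [Finset.sum_eq_single s]
  · rw [if_pos (le_refl _)]
    simp [Nat.choose_self]
  · intro s' _ hne
    by_cases h : (s : ℕ) ≤ (s' : ℕ)
    · have hlt : (s : ℕ) < (s' : ℕ) := lt_of_le_of_ne h (fun hh => hne (Fin.ext hh.symm))
      rw [if_pos h, ha s' hlt, smul_zero]
    · rw [if_neg h]
  · intro h
    exact absurd (Finset.mem_univ s) h

theorem derT_zero_above {da db : ℕ} {a b : Fin t → M} (e : R)
    (ha : ∀ s : Fin t, da ≤ (s : ℕ) → a s = 0) (hb : ∀ s : Fin t, db ≤ (s : ℕ) → b s = 0)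
    (s : Fin t) (hda : da ≤ (s : ℕ)) (hdb : db ≤ (s : ℕ)) : derT a b e s = 0 := by
  rw [derT_apply_top a b e s (fun s' hs' => ha s' (le_trans hda (le_of_lt hs')))]
  rw [ha s hda, hb s hdb, sub_zero]

theorem derT_self_zero (a : Fin t → M) : derT a a (0 : R) = fun _ => 0 := by
  funext s
  unfold derT
  rw [sub_eq_zero, Finset.sum_eq_single s]
  · rw [if_pos (le_refl _)]
    simp [Nat.choose_self]
  · intro s' _ hne
    by_cases h : (s : ℕ) ≤ (s' : ℕ)
    · have hlt : (s : ℕ) < (s' : ℕ) := lt_of_le_of_ne h (fun hh => hne (Fin.ext hh.symm))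
      rw [if_pos h]
      rw [zero_pow (by omega : (s' : ℕ) - (s : ℕ) ≠ 0), mul_zero, zero_smul]
    · rw [if_neg h]
  · intro h
    exact absurd (Finset.mem_univ s) h

end Deg

section FS

variable {R : Type} [CommRing R]

open Classical in
/-- the finite set of all subset sums (including the empty one). -/
noncomputable def fsF {k : ℕ} (r : Fin k → R) : Finset R :=
  (Finset.univ : Finset (Finset (Fin k))).image (fun T => ∑ i ∈ T, r i)

theorem mem_fsF_iff {k : ℕ} (r : Fin k → R) (x : R) :
    x ∈ fsF r ↔ ∃ T : Finset (Fin k), x = ∑ i ∈ T, r i := by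
  classical
  unfold fsF
  rw [Finset.mem_image]
  constructor
  · rintro ⟨T, -, rfl⟩; exact ⟨T, rfl⟩
  · rintro ⟨T, rfl⟩; exact ⟨T, Finset.mem_univ _, rfl⟩

theorem zero_mem_fsF {k : ℕ} (r : Fin k → R) : (0 : R) ∈ fsF r :=
  (mem_fsF_iff r 0).2 ⟨∅, (Finset.sum_empty).symm⟩

theorem sum_mem_fsF {k : ℕ} (r : Fin k → R) (T : Finset (Fin k)) : (∑ i ∈ T, r i) ∈ fsF r :=
  (mem_fsF_iff r _).2 ⟨T, rfl⟩

theorem fsF_comp_subset {k k' : ℕ} (r : Fin k → R) (e : Fin k' ↪ Fin k) :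
    fsF (r ∘ e) ⊆ fsF r := by
  intro x hx
  obtain ⟨T, rfl⟩ := (mem_fsF_iff _ x).1 hx
  refine (mem_fsF_iff r _).2 ⟨T.map e, ?_⟩
  rw [Finset.sum_map]
  rfl

theorem card_fsF_le {k : ℕ} (r : Fin k → R) : (fsF r).card ≤ 2 ^ k := by
  classical
  unfold fsF
  refine le_trans (Finset.card_image_le) ?_
  rw [Finset.card_univ, Fintype.card_finset, Fintype.card_fin]

end FS

section Closure

variable {R : Type} [CommRing R] {M : Type} [AddCommGroup M] [Module R M] {t : ℕ}

open Classical in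
/-- iterated closure of a set of coefficient tuples under the derived-tuple operation. -/
noncomputable def derCl (base : Finset (Fin t → M)) (V : Finset R) : ℕ → Finset (Fin t → M)
  | 0 => base
  | (j+1) => derCl base V j ∪
      ((derCl base V j ×ˢ derCl base V j) ×ˢ V).image (fun x => derT x.1.1 x.1.2 x.2)

theorem base_subset_derCl (base : Finset (Fin t → M)) (V : Finset R) (j : ℕ) :
    base ⊆ derCl base V j := by
  induction j with
  | zero => exact Finset.Subset.refl _
  | succ j ih => exact Finset.Subset.trans ih (by classical exact Finset.subset_union_left)

theorem derCl_mono_j (base : Finset (Fin t → M)) (V : Finset R) {j j' : ℕ} (h : j ≤ j') :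
    derCl base V j ⊆ derCl base V j' := by
  induction j' with
  | zero => rw [Nat.le_zero.1 h]
  | succ j' ih =>
    rcases Nat.lt_or_ge j (j'+1) with h' | h'
    · exact Finset.Subset.trans (ih (Nat.lt_succ_iff.1 h')) (by classical exact Finset.subset_union_left)
    · have : j = j' + 1 := le_antisymm h h'
      rw [this]

theorem derT_mem_derCl {base : Finset (Fin t → M)} {V : Finset R} {j : ℕ}
    {a b : Fin t → M} {e : R} (ha : a ∈ derCl base V j) (hb : b ∈ derCl base V j) (he : e ∈ V) :
    derT a b e ∈ derCl base V (j+1) := by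
  classical
  refine Finset.mem_union_right _ (Finset.mem_image.2 ⟨((a, b), e), ?_, rfl⟩)
  exact Finset.mem_product.2 ⟨Finset.mem_product.2 ⟨ha, hb⟩, he⟩

theorem derCl_mono_base {base base' : Finset (Fin t → M)} {V V' : Finset R}
    (hb : base ⊆ base') (hV : V ⊆ V') (j : ℕ) : derCl base V j ⊆ derCl base' V' j := by
  induction j with
  | zero => exact hb
  | succ j ih =>
    classical
    intro x hx
    rcases Finset.mem_union.1 hx with h | h
    · exact Finset.mem_union_left _ (ih h)
    · obtain ⟨⟨⟨a, b⟩, e⟩, hm, rfl⟩ := Finset.mem_image.1 h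
      obtain ⟨hab, he⟩ := Finset.mem_product.1 hm
      obtain ⟨ha, hbm⟩ := Finset.mem_product.1 hab
      exact derT_mem_derCl (ih ha) (ih hbm) (hV he)

theorem derCl_transport {base base' : Finset (Fin t → M)} {V V' : Finset R}
    (hb : base ⊆ derCl base' V' 1) (hV : V ⊆ V') (j : ℕ) :
    derCl base V j ⊆ derCl base' V' (j+1) := by
  induction j with
  | zero => exact hb
  | succ j ih =>
    classical
    intro x hx
    rcases Finset.mem_union.1 hx with h | h
    · exact derCl_mono_j _ _ (Nat.le_succ _) (ih h)
    · obtain ⟨⟨⟨a, b⟩, e⟩, hm, rfl⟩ := Finset.mem_image.1 h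
      obtain ⟨hab, he⟩ := Finset.mem_product.1 hm
      obtain ⟨ha, hbm⟩ := Finset.mem_product.1 hab
      exact derT_mem_derCl (ih ha) (ih hbm) (hV he)

/-- numeric bound for the cardinality of `derCl`. -/
def dBnd (b v : ℕ) : ℕ → ℕ
  | 0 => b
  | (j+1) => dBnd b v j + dBnd b v j * dBnd b v j * v

theorem derCl_card_le {base : Finset (Fin t → M)} {V : Finset R} {b v : ℕ}
    (hb : base.card ≤ b) (hv : V.card ≤ v) (j : ℕ) : (derCl base V j).card ≤ dBnd b v j := by
  induction j with
  | zero => exact hb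
  | succ j ih =>
    classical
    refine le_trans (Finset.card_union_le _ _) ?_
    refine Nat.add_le_add ih (le_trans (Finset.card_image_le) ?_)
    rw [Finset.card_product, Finset.card_product]
    exact Nat.mul_le_mul (Nat.mul_le_mul ih ih) hv

theorem dBnd_mono_b {b b' v : ℕ} (h : b ≤ b') (j : ℕ) : dBnd b v j ≤ dBnd b' v j := by
  induction j with
  | zero => exact h
  | succ j ih =>
    exact Nat.add_le_add ih (Nat.mul_le_mul (Nat.mul_le_mul ih ih) (le_refl _))

end Closure

theorem sum_pad {N : Type} [AddCommMonoid N] {B B' : ℕ} (hB : B ≤ B')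
    (f : Fin B → N) (F : Fin B' → N)
    (hcompat : ∀ (j : Fin B') (h : (j : ℕ) < B), F j = f ⟨j, h⟩)
    (hzero : ∀ (j : Fin B'), ¬ ((j : ℕ) < B) → F j = 0) :
    ∑ j, F j = ∑ j, f j := by
  classical
  rw [← Finset.sum_subset (Finset.subset_univ ((Finset.univ : Finset (Fin B)).map (Fin.castLEEmb hB)))]
  · rw [Finset.sum_map]
    refine Finset.sum_congr rfl fun i _ => ?_
    exact hcompat _ i.isLt
  · intro x _ hx
    refine hzero x fun hlt => hx ?_
    exact Finset.mem_map.2 ⟨⟨x, hlt⟩, Finset.mem_univ _, by ext; simp⟩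

section Span

variable {R : Type} [CommRing R] {M : Type} [AddCommGroup M] [Module R M] {t : ℕ}

open Classical in
/-- finite set of bounded formal combinations `∑_{j<B} ε_j • evalT (a_j) (v_j)`. -/
noncomputable def spanF (base : Finset (Fin t → M)) (V : Finset R) (B : ℕ) : Finset M :=
  (Finset.univ : Finset (Fin B →
      (↥({-1,0,1} : Finset ℤ) × ↥(derCl base V B) × ↥V))).image
    (fun g => ∑ j, ((g j).1.1) • evalT ((g j).2.1.1) ((g j).2.2.1))

theorem mem_spanF_iff {base : Finset (Fin t → M)} {V : Finset R} {B : ℕ} {x : M} :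
    x ∈ spanF base V B ↔ ∃ (ε : Fin B → ℤ) (a : Fin B → (Fin t → M)) (v : Fin B → R),
      (∀ j, ε j ∈ ({-1,0,1} : Finset ℤ)) ∧ (∀ j, a j ∈ derCl base V B) ∧ (∀ j, v j ∈ V) ∧
      x = ∑ j, ε j • evalT (a j) (v j) := by
  classical
  unfold spanF
  rw [Finset.mem_image]
  constructor
  · rintro ⟨g, -, rfl⟩
    exact ⟨fun j => (g j).1.1, fun j => (g j).2.1.1, fun j => (g j).2.2.1,
      fun j => (g j).1.2, fun j => (g j).2.1.2, fun j => (g j).2.2.2, rfl⟩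
  · rintro ⟨ε, a, v, hε, ha, hv, rfl⟩
    exact ⟨fun j => ⟨⟨ε j, hε j⟩, ⟨a j, ha j⟩, ⟨v j, hv j⟩⟩, Finset.mem_univ _, rfl⟩

theorem zero_mem_spanF {base : Finset (Fin t → M)} {V : Finset R} (B : ℕ)
    (hb : base.Nonempty) (hV : V.Nonempty) : (0 : M) ∈ spanF base V B := by
  obtain ⟨a0, ha0⟩ := hb
  obtain ⟨v0, hv0⟩ := hV
  refine mem_spanF_iff.2 ⟨fun _ => 0, fun _ => a0, fun _ => v0, ?_, ?_, ?_, ?_⟩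
  · intro j; simp
  · intro j; exact base_subset_derCl _ _ _ ha0
  · intro j; exact hv0
  · simp

theorem spanF_mono {base base' : Finset (Fin t → M)} {V V' : Finset R} {B B' : ℕ}
    (hbase : base ⊆ base') (hV : V ⊆ V') (hB : B ≤ B')
    (hb' : base'.Nonempty) (hV' : V'.Nonempty) :
    spanF base V B ⊆ spanF base' V' B' := by
  obtain ⟨a0, ha0⟩ := hb'
  obtain ⟨v0, hv0⟩ := hV'
  intro x hx
  obtain ⟨ε, a, v, hε, ha, hv, rfl⟩ := mem_spanF_iff.1 hx
  refine mem_spanF_iff.2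
    ⟨fun j => if h : (j : ℕ) < B then ε ⟨j, h⟩ else 0,
     fun j => if h : (j : ℕ) < B then a ⟨j, h⟩ else a0,
     fun j => if h : (j : ℕ) < B then v ⟨j, h⟩ else v0, ?_, ?_, ?_, ?_⟩
  · intro j
    dsimp only
    split_ifs with h
    · exact hε _
    · simp
  · intro j
    dsimp only
    split_ifs with h
    · exact derCl_mono_base hbase hV B' (derCl_mono_j _ _ hB (ha _))
    · exact base_subset_derCl _ _ _ ha0
  · intro j
    dsimp only
    split_ifs with h
    · exact hV (hv _)
    · exact hv0
  · refine (sum_pad hB (fun j => ε j • evalT (a j) (v j)) _ ?_ ?_).symm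
    · intro j h
      simp only [dif_pos h]
    · intro j h
      simp only [dif_neg h, zero_smul]

theorem spanF_add_mem {base : Finset (Fin t → M)} {V : Finset R} {B₁ B₂ : ℕ} {x y : M}
    (hx : x ∈ spanF base V B₁) (hy : y ∈ spanF base V B₂) :
    x + y ∈ spanF base V (B₁ + B₂) := by
  obtain ⟨ε₁, a₁, v₁, hε₁, ha₁, hv₁, rfl⟩ := mem_spanF_iff.1 hx
  obtain ⟨ε₂, a₂, v₂, hε₂, ha₂, hv₂, rfl⟩ := mem_spanF_iff.1 hy
  refine mem_spanF_iff.2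
    ⟨Fin.addCases ε₁ ε₂, Fin.addCases a₁ a₂, Fin.addCases v₁ v₂, ?_, ?_, ?_, ?_⟩
  · intro j
    refine Fin.addCases (fun i => ?_) (fun i => ?_) j
    · simpa using hε₁ i
    · simpa using hε₂ i
  · intro j
    refine Fin.addCases (fun i => ?_) (fun i => ?_) j
    · simpa using derCl_mono_j base V (Nat.le_add_right _ _) (ha₁ i)
    · simpa using derCl_mono_j base V (Nat.le_add_left _ _) (ha₂ i)
  · intro j
    refine Fin.addCases (fun i => ?_) (fun i => ?_) j
    · simpa using hv₁ i
    · simpa using hv₂ i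
  · rw [Fin.sum_univ_add]
    congr 1
    · exact (Finset.sum_congr rfl fun i _ => by simp).symm
    · exact (Finset.sum_congr rfl fun i _ => by simp).symm

theorem smul_evalT_mem_spanF {base : Finset (Fin t → M)} {V : Finset R} {B : ℕ}
    {ε : ℤ} {a : Fin t → M} {v : R} (hε : ε ∈ ({-1,0,1} : Finset ℤ))
    (ha : a ∈ derCl base V B) (hv : v ∈ V) :
    ε • evalT a v ∈ spanF base V (B + 1) := by
  refine mem_spanF_iff.2 ⟨fun j => if (j : ℕ) < 1 then ε else 0, fun _ => a, fun _ => v,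
    ?_, ?_, ?_, ?_⟩
  · intro j
    dsimp only
    split_ifs with h
    · exact hε
    · simp
  · intro j
    exact derCl_mono_j _ _ (Nat.le_succ _) ha
  · intro j
    exact hv
  · have hp := sum_pad (Nat.succ_le_succ (Nat.zero_le B)) (fun _ : Fin 1 => ε • evalT a v)
      (fun j : Fin (B + 1) => (if (j : ℕ) < 1 then ε else 0) • evalT a v) ?_ ?_
    · exact (hp.trans (Fin.sum_univ_one _)).symm
    · intro j h
      simp only [if_pos h]
    · intro j h
      simp only [if_neg h, zero_smul]

theorem spanF_transport {base base' : Finset (Fin t → M)} {V V' : Finset R} {B : ℕ}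
    (hb : base ⊆ derCl base' V' 1) (hV : V ⊆ V')
    (hb' : base'.Nonempty) (hV' : V'.Nonempty) :
    spanF base V B ⊆ spanF base' V' (B + 1) := by
  obtain ⟨a0, ha0⟩ := hb'
  obtain ⟨v0, hv0⟩ := hV'
  intro x hx
  obtain ⟨ε, a, v, hε, ha, hv, rfl⟩ := mem_spanF_iff.1 hx
  refine mem_spanF_iff.2
    ⟨fun j => if h : (j : ℕ) < B then ε ⟨j, h⟩ else 0,
     fun j => if h : (j : ℕ) < B then a ⟨j, h⟩ else a0,
     fun j => if h : (j : ℕ) < B then v ⟨j, h⟩ else v0, ?_, ?_, ?_, ?_⟩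
  · intro j
    dsimp only
    split_ifs with h
    · exact hε _
    · simp
  · intro j
    dsimp only
    split_ifs with h
    · exact derCl_transport hb hV B (ha _)
    · exact base_subset_derCl _ _ _ ha0
  · intro j
    dsimp only
    split_ifs with h
    · exact hV (hv _)
    · exact hv0
  · refine (sum_pad (Nat.le_succ B) (fun j => ε j • evalT (a j) (v j)) _ ?_ ?_).symm
    · intro j h
      simp only [dif_pos h]
    · intro j h
      simp only [dif_neg h, zero_smul]

theorem card_spanF_le {base : Finset (Fin t → M)} {V : Finset R} {B b v : ℕ}
    (hb : base.card ≤ b) (hv : V.card ≤ v) :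
    (spanF base V B).card ≤ (3 * dBnd b v B * v) ^ B := by
  classical
  unfold spanF
  refine le_trans (Finset.card_image_le) ?_
  rw [Finset.card_univ]
  rw [Fintype.card_fun]
  rw [Fintype.card_fin]
  refine Nat.pow_le_pow_left ?_ _
  rw [Fintype.card_prod, Fintype.card_prod]
  have h1 : Fintype.card ↥({-1,0,1} : Finset ℤ) ≤ 3 := by
    rw [Fintype.card_coe]
    refine le_trans (Finset.card_insert_le _ _) ?_
    refine Nat.succ_le_succ ?_
    exact le_trans (Finset.card_insert_le _ _) (by simp)
  have h2 : Fintype.card ↥(derCl base V B) ≤ dBnd b v B := by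
    rw [Fintype.card_coe]
    exact derCl_card_le hb hv B
  have h3 : Fintype.card ↥V ≤ v := by
    rw [Fintype.card_coe]
    exact hv
  calc Fintype.card ↥({-1,0,1} : Finset ℤ) *
        (Fintype.card ↥(derCl base V B) * Fintype.card ↥V)
      ≤ 3 * (dBnd b v B * v) := Nat.mul_le_mul h1 (Nat.mul_le_mul h2 h3)
    _ = 3 * dBnd b v B * v := by ring

end Span

section Main

open Classical in
/-- base set of coefficient tuples of a family, with the zero tuple added. -/
noncomputable def tset {M : Type} {t : ℕ} {ι : Type} [Fintype ι] (A : ι → Fin t → M)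
    [Zero M] : Finset (Fin t → M) :=
  insert (fun _ => (0 : M)) (Finset.image A Finset.univ)

theorem zero_mem_tset {M : Type} {t : ℕ} {ι : Type} [Fintype ι] (A : ι → Fin t → M) [Zero M] :
    (fun _ => (0 : M)) ∈ tset A := by
  classical
  exact Finset.mem_insert_self _ _

theorem apply_mem_tset {M : Type} {t : ℕ} {ι : Type} [Fintype ι] (A : ι → Fin t → M) [Zero M]
    (i : ι) : A i ∈ tset A := by
  classical
  exact Finset.mem_insert_of_mem (Finset.mem_image_of_mem _ (Finset.mem_univ i))

theorem tset_nonempty {M : Type} {t : ℕ} {ι : Type} [Fintype ι] (A : ι → Fin t → M) [Zero M] :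
    (tset A).Nonempty := ⟨_, zero_mem_tset A⟩

theorem card_tset_le {M : Type} {t : ℕ} {ι : Type} [Fintype ι] (A : ι → Fin t → M) [Zero M] :
    (tset A).card ≤ Fintype.card ι + 1 := by
  classical
  refine le_trans (Finset.card_insert_le _ _) (Nat.succ_le_succ ?_)
  exact le_trans (Finset.card_image_le) (by rw [Finset.card_univ])

/-- lexicographic order on weight vectors, most significant at the top degree. -/
def LexLt {t : ℕ} (w' w : Fin (t+1) → ℕ) : Prop :=
  ∃ i, (∀ j, i < j → w' j = w j) ∧ w' i < w i

theorem lexLt_wf (t : ℕ) : WellFounded (@LexLt t) := by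
  have h := Pi.Lex.wellFounded (fun a b : Fin (t+1) => b < a)
    (s := fun _ => ((· < ·) : ℕ → ℕ → Prop)) (fun _ => Nat.lt_wfRel.wf)
  exact h

/-- The main inductive statement: either a fully monochromatic configuration anchored at its
base point exists ("win"), or there is a focused family of `m` configurations with
pairwise-distinct colours, all distinct from the colour of the focus. -/
def RS (t : ℕ) (w : Fin (t+1) → ℕ) (n : ℕ) (m : ℕ) : Prop :=
  ∀ c : ℕ, 0 < c → ∃ k B : ℕ, 0 < k ∧
  ∀ (R : Type) [CommRing R] (M : Type) [AddCommGroup M] [Module R M]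
    (ι : Type) [Fintype ι], Fintype.card ι = n →
    ∀ (A : ι → Fin t → M) (D : ι → Fin (t+1)) (lb : ι → ℕ),
    (∀ i (s : Fin t), (D i : ℕ) ≤ (s : ℕ) → A i s = 0) →
    (∀ i, lb i < w (D i)) →
    (∀ i j (s : Fin t), D i = D j → lb i = lb j → (s : ℕ) + 1 = (D i : ℕ) → A i s = A j s) →
    ∀ (r : Fin k → R) (C : Type) [Fintype C], Fintype.card C ≤ c →
    ∀ d : M → C,
    (∃ (T : Finset (Fin k)) (y : M), T.Nonempty ∧
        y ∈ spanF (tset A) (fsF r) B ∧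
        ∀ i, d (y + evalT (A i) (∑ ℓ ∈ T, r ℓ)) = d y)
    ∨ (∃ (f : M) (i₀ : ι) (v : Fin m → Finset (Fin k)),
        f ∈ spanF (tset A) (fsF r) B ∧
        (D i₀ : ℕ) ≠ 0 ∧
        (∀ a, (v a).Nonempty) ∧
        (∀ a i, (D i : ℕ) ≠ 0 →
          d (f + evalT (A i) (∑ ℓ ∈ v a, r ℓ)) = d (f + evalT (A i₀) (∑ ℓ ∈ v a, r ℓ))) ∧
        Function.Injective
          (Fin.cons (d f) (fun a => d (f + evalT (A i₀) (∑ ℓ ∈ v a, r ℓ))) : Fin (m+1) → C))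

/-- the body of the "win only" statement with fixed numeric data. -/
def ASbody (t : ℕ) (w : Fin (t+1) → ℕ) (n k B c : ℕ) : Prop :=
  ∀ (R : Type) [CommRing R] (M : Type) [AddCommGroup M] [Module R M]
    (ι : Type) [Fintype ι], Fintype.card ι = n →
    ∀ (A : ι → Fin t → M) (D : ι → Fin (t+1)) (lb : ι → ℕ),
    (∀ i (s : Fin t), (D i : ℕ) ≤ (s : ℕ) → A i s = 0) →
    (∀ i, lb i < w (D i)) →
    (∀ i j (s : Fin t), D i = D j → lb i = lb j → (s : ℕ) + 1 = (D i : ℕ) → A i s = A j s) →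
    ∀ (r : Fin k → R) (C : Type) [Fintype C], Fintype.card C ≤ c →
    ∀ d : M → C,
    ∃ (T : Finset (Fin k)) (y : M), T.Nonempty ∧
      y ∈ spanF (tset A) (fsF r) B ∧
      ∀ i, d (y + evalT (A i) (∑ ℓ ∈ T, r ℓ)) = d y

/-- The "win only" statement. -/
def AS (t : ℕ) (w : Fin (t+1) → ℕ) (n : ℕ) : Prop :=
  ∀ c : ℕ, 0 < c → ∃ k B : ℕ, 0 < k ∧ ASbody t w n k B c

theorem RS_zero (t : ℕ) (w : Fin (t+1) → ℕ) (n : ℕ) : RS t w n 0 := by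
  intro c _
  refine ⟨1, 0, Nat.one_pos, ?_⟩
  intro R _ M _ _ ι _ hcard A D lb hA hlb hcons r C _ hC d
  by_cases hex : ∃ i : ι, (D i : ℕ) ≠ 0
  · obtain ⟨i₀, hi₀⟩ := hex
    refine Or.inr ⟨0, i₀, fun a => a.elim0, ?_, hi₀, fun a => a.elim0, fun a => a.elim0, ?_⟩
    · exact zero_mem_spanF 0 (tset_nonempty A) ⟨0, zero_mem_fsF r⟩
    · intro a b _
      exact Fin.ext (by omega)
  · push_neg at hex
    refine Or.inl ⟨{0}, 0, ⟨0, Finset.mem_singleton_self 0⟩, ?_, ?_⟩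
    · exact zero_mem_spanF 0 (tset_nonempty A) ⟨0, zero_mem_fsF r⟩
    · intro i
      rw [evalT_eq_zero (fun s => hA i s (by rw [hex i]; exact Nat.zero_le _)), add_zero]

theorem AS_of_RS {t : ℕ} {w : Fin (t+1) → ℕ} {n : ℕ} (h : ∀ m, RS t w n m) : AS t w n := by
  intro c hc
  obtain ⟨k, B, hk, hmain⟩ := h c c hc
  refine ⟨k, B, hk, ?_⟩
  intro R _ M _ _ ι _ hcard A D lb hA hlb hcons r C _ hC d
  rcases hmain R M ι hcard A D lb hA hlb hcons r C hC d with hwin | hstruct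
  · exact hwin
  · exfalso
    obtain ⟨f, i₀, v, -, -, -, -, hinj⟩ := hstruct
    have := Fintype.card_le_of_injective _ hinj
    rw [Fintype.card_fin] at this
    omega

end Main

section Helpers

theorem snoc_inj_of_cons_inj {m : ℕ} {C : Type} {x₀ : C} {g : Fin m → C}
    (h : Function.Injective (Fin.cons x₀ g : Fin (m+1) → C)) :
    Function.Injective (Fin.snoc g x₀ : Fin (m+1) → C) := by
  intro a b hab
  induction a using Fin.lastCases with
  | last =>
    induction b using Fin.lastCases with
    | last => rfl
    | cast j =>
      rw [Fin.snoc_last, Fin.snoc_castSucc] at hab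
      have : (0 : Fin (m+1)) = Fin.succ j := h (by rw [Fin.cons_zero, Fin.cons_succ]; exact hab)
      exact absurd this.symm (Fin.succ_ne_zero j)
  | cast i =>
    induction b using Fin.lastCases with
    | last =>
      rw [Fin.snoc_last, Fin.snoc_castSucc] at hab
      have : (0 : Fin (m+1)) = Fin.succ i := h (by rw [Fin.cons_zero, Fin.cons_succ]; exact hab.symm)
      exact absurd this.symm (Fin.succ_ne_zero i)
    | cast j =>
      rw [Fin.snoc_castSucc, Fin.snoc_castSucc] at hab
      have : Fin.succ i = Fin.succ j := h (by rw [Fin.cons_succ, Fin.cons_succ]; exact hab)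
      rw [Fin.succ_inj.1 this]

theorem cons_snoc_inj {m : ℕ} {C : Type} {x x₀ : C} {g : Fin m → C}
    (h1 : Function.Injective (Fin.cons x₀ g : Fin (m+1) → C))
    (h2 : ∀ a : Fin (m+1), x ≠ (Fin.snoc g x₀ : Fin (m+1) → C) a) :
    Function.Injective (Fin.cons x (Fin.snoc g x₀) : Fin (m+2) → C) := by
  have hs := snoc_inj_of_cons_inj h1
  intro a b hab
  induction a using Fin.cases with
  | zero =>
    induction b using Fin.cases with
    | zero => rfl
    | succ j =>
      rw [Fin.cons_zero, Fin.cons_succ] at hab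
      exact absurd hab (h2 j)
  | succ i =>
    induction b using Fin.cases with
    | zero =>
      rw [Fin.cons_zero, Fin.cons_succ] at hab
      exact absurd hab.symm (h2 i)
    | succ j =>
      rw [Fin.cons_succ, Fin.cons_succ] at hab
      rw [hs hab]

/-- the next weight vector after removing one class at level `δ`. -/
def wNext (t : ℕ) (w : Fin (t+1) → ℕ) (nH : ℕ) (δ : Fin (t+1)) : Fin (t+1) → ℕ :=
  fun s => if (δ : ℕ) < (s : ℕ) then w s else if s = δ then w δ - 1 else w s + (nH + 1)

theorem wNext_lexLt {t : ℕ} (w : Fin (t+1) → ℕ) (nH : ℕ) (δ : Fin (t+1)) (hδ : 0 < w δ) :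
    LexLt (wNext t w nH δ) w := by
  refine ⟨δ, ?_, ?_⟩
  · intro j hj
    unfold wNext
    rw [if_pos (show (δ : ℕ) < (j : ℕ) from hj)]
  · unfold wNext
    rw [if_neg (lt_irrefl _), if_pos rfl]
    omega

end Helpers

section Step

theorem RS_succ (t : ℕ) (w : Fin (t+1) → ℕ) (n : ℕ) (m : ℕ)
    (IH : ∀ w', LexLt w' w → ∀ n', AS t w' n')
    (ihm : RS t w n m) : RS t w n (m+1) := by
  classical
  intro c hc
  obtain ⟨kR, BR, hkR, HR⟩ := ihm c hc
  set nH := n * 2 ^ kR with hnH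
  set SZ := (3 * dBnd (n + 1) (2 ^ kR) (BR + 1) * 2 ^ kR) ^ (BR + 1) with hSZdef
  set cstar := c ^ SZ with hcstardef
  have hcstar : 0 < cstar := Nat.pow_pos hc
  have hASall : ∀ δ : Fin (t+1), ∃ kB : ℕ × ℕ, 0 < kB.1 ∧
      (0 < w δ → ASbody t (wNext t w nH δ) nH kB.1 kB.2 cstar) := by
    intro δ
    by_cases h : 0 < w δ
    · obtain ⟨k', B', hk', hbody⟩ := IH (wNext t w nH δ) (wNext_lexLt w nH δ h) nH cstar hcstar
      exact ⟨(k', B'), hk', fun _ => hbody⟩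
    · exact ⟨(1, 0), Nat.one_pos, fun h' => absurd h' h⟩
  choose kB hkBpos hkB using hASall
  set KH := Finset.univ.sup (fun δ : Fin (t+1) => (kB δ).1) with hKHdef
  set BH := Finset.univ.sup (fun δ : Fin (t+1) => (kB δ).2) with hBHdef
  refine ⟨KH + kR, BH + BR + 3, by omega, ?_⟩
  intro R instR M instM instRM ι instι hcard A D lb hA hlb hcons r C instC hC d
  set embR : Fin kR ↪ Fin (KH + kR) := Fin.natAddEmb KH with hembR
  set rR : Fin kR → R := r ∘ embR with hrR
  by_cases hex : ∃ i : ι, (D i : ℕ) ≠ 0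
  · -- main case
    obtain ⟨i₁, hi₁⟩ := hex
    obtain ⟨q, hqmem, hqmin⟩ := Finset.exists_min_image
      (Finset.univ.filter (fun i : ι => (D i : ℕ) ≠ 0)) (fun i => (D i : ℕ))
      ⟨i₁, Finset.mem_filter.2 ⟨Finset.mem_univ _, hi₁⟩⟩
    have hqne : (D q : ℕ) ≠ 0 := (Finset.mem_filter.1 hqmem).2
    have hqmin' : ∀ i : ι, (D i : ℕ) ≠ 0 → (D q : ℕ) ≤ (D i : ℕ) := fun i hi =>
      hqmin i (Finset.mem_filter.2 ⟨Finset.mem_univ _, hi⟩)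
    set δ := D q with hδdef
    have hwδ : 0 < w δ := lt_of_le_of_lt (Nat.zero_le _) (hlb q)
    have hKH : (kB δ).1 ≤ KH := Finset.le_sup (f := fun δ => (kB δ).1) (Finset.mem_univ δ)
    have hBH2 : (kB δ).2 ≤ BH := Finset.le_sup (f := fun δ => (kB δ).2) (Finset.mem_univ δ)
    set embL : Fin (kB δ).1 ↪ Fin (KH + kR) := (Fin.castLEEmb hKH).trans (Fin.castAddEmb kR)
      with hembL
    set rL : Fin (kB δ).1 → R := r ∘ embL with hrL
    -- disjointness of left and right supports
    have hdisj : ∀ (S1 : Finset (Fin (kB δ).1)) (S2 : Finset (Fin kR)),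
        Disjoint (S1.map embL) (S2.map embR) := by
      intro S1 S2
      rw [Finset.disjoint_left]
      rintro x hx1 hx2
      obtain ⟨a, -, rfl⟩ := Finset.mem_map.1 hx1
      obtain ⟨b, -, hab⟩ := Finset.mem_map.1 hx2
      have h1 : (embL a : ℕ) = (a : ℕ) := rfl
      have h2 : (embR b : ℕ) = KH + (b : ℕ) := rfl
      have := congrArg (fun x : Fin (KH + kR) => (x : ℕ)) hab
      simp only [h1, h2] at this
      have := a.isLt
      omega
    -- the probe set
    set PF : Finset M := spanF (tset A) (fsF rR) (BR + 1) with hPFdef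
    have hPFcard : PF.card ≤ SZ := by
      refine le_trans (card_spanF_le ?_ (card_fsF_le rR)) (le_refl _)
      exact le_trans (card_tset_le A) (by rw [hcard])
    -- derived family data
    set eT : Finset (Fin kR) → R := fun T => ∑ ℓ ∈ T, rR ℓ with heT
    set AH : ι × Finset (Fin kR) → Fin t → M := fun p =>
      if (D p.1 : ℕ) = 0 then (fun _ => 0) else derT (A p.1) (A q) (eT p.2) with hAHdef
    set DH : ι × Finset (Fin kR) → Fin (t+1) := fun p =>
      if (D p.1 : ℕ) = 0 then 0
      else if D p.1 = δ ∧ lb p.1 = lb q then ⟨(δ : ℕ) - 1, by omega⟩ else D p.1 with hDHdef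
    set enc : ι × Finset (Fin kR) → ℕ :=
      fun p => ((Fintype.equivFin (ι × Finset (Fin kR))) p : ℕ) with hencdef
    have hcardH : Fintype.card (ι × Finset (Fin kR)) = nH := by
      rw [Fintype.card_prod, hcard, Fintype.card_finset, Fintype.card_fin]
    have henc_lt : ∀ p, enc p < nH := by
      intro p
      rw [← hcardH]
      exact ((Fintype.equivFin (ι × Finset (Fin kR))) p).isLt
    have henc_inj : ∀ p p', enc p = enc p' → p = p' := fun p p' h =>
      (Fintype.equivFin (ι × Finset (Fin kR))).injective (Fin.ext h)
    set lbH : ι × Finset (Fin kR) → ℕ := fun p =>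
      if (D p.1 : ℕ) = 0 then enc p
      else if D p.1 = δ ∧ lb p.1 = lb q then enc p
      else if D p.1 = δ then (if lb p.1 < lb q then lb p.1 else lb p.1 - 1)
      else lb p.1 with hlbHdef
    have hδ1 : 1 ≤ (δ : ℕ) := Nat.one_le_iff_ne_zero.2 hqne
    have hAH : ∀ (p : ι × Finset (Fin kR)) (s : Fin t), (DH p : ℕ) ≤ (s : ℕ) → AH p s = 0 := by
      intro p s hs
      by_cases h1 : (D p.1 : ℕ) = 0
      · simp only [hAHdef, if_pos h1]
      · simp only [hAHdef, if_neg h1]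
        by_cases h2 : D p.1 = δ ∧ lb p.1 = lb q
        · simp only [hDHdef, if_neg h1, if_pos h2] at hs
          rcases Nat.lt_or_ge (s : ℕ) (δ : ℕ) with hlt | hge
          · -- s + 1 = δ : top coefficients cancel
            have hseq : (s : ℕ) + 1 = (δ : ℕ) := by omega
            rw [derT_apply_top _ _ _ _ (fun s' hs' => hA p.1 s' (by rw [h2.1]; omega))]
            have := hcons p.1 q s (by rw [h2.1]) h2.2 (by rw [h2.1]; exact hseq)
            rw [this, sub_self]
          · exact derT_zero_above (da := (δ : ℕ)) (db := (δ : ℕ)) _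
              (fun s' hs' => hA p.1 s' (by rw [h2.1]; exact hs'))
              (fun s' hs' => hA q s' hs') s hge hge
        · simp only [hDHdef, if_neg h1, if_neg h2] at hs
          exact derT_zero_above (da := ((D p.1) : ℕ)) (db := (δ : ℕ)) _
            (fun s' hs' => hA p.1 s' hs') (fun s' hs' => hA q s' hs') s hs
            (le_trans (hqmin' p.1 h1) hs)
    have hlbq : lb q < w δ := hlb q
    have hlbH : ∀ p, lbH p < wNext t w nH δ (DH p) := by
      intro p
      by_cases h1 : (D p.1 : ℕ) = 0
      · simp only [hlbHdef, hDHdef, if_pos h1]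
        have h0 : wNext t w nH δ 0 = w 0 + (nH + 1) := by
          unfold wNext
          rw [if_neg (by simp), if_neg (by intro hh; rw [Fin.ext_iff] at hh; simp at hh; omega)]
        rw [h0]
        have := henc_lt p
        omega
      · by_cases h2 : D p.1 = δ ∧ lb p.1 = lb q
        · simp only [hlbHdef, hDHdef, if_neg h1, if_pos h2]
          have h0 : wNext t w nH δ ⟨(δ : ℕ) - 1, by omega⟩ =
              w ⟨(δ : ℕ) - 1, by omega⟩ + (nH + 1) := by
            unfold wNext
            rw [if_neg (by simp only [Fin.val_mk]; omega),
              if_neg (by intro hh; rw [Fin.ext_iff] at hh; simp only [Fin.val_mk] at hh; omega)]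
          rw [h0]
          have := henc_lt p
          omega
        · by_cases h3 : D p.1 = δ
          · simp only [hlbHdef, hDHdef, if_neg h1, if_neg h2, if_pos h3]
            have h0 : wNext t w nH δ δ = w δ - 1 := by
              unfold wNext
              rw [if_neg (lt_irrefl _), if_pos rfl]
            rw [h3, h0]
            have hlbp : lb p.1 < w δ := by rw [← h3]; exact hlb p.1
            have hne : lb p.1 ≠ lb q := fun hh => h2 ⟨h3, hh⟩
            split_ifs with h4 <;> omega
          · simp only [hlbHdef, hDHdef, if_neg h1, if_neg h2, if_neg h3]
            have hgt : (δ : ℕ) < ((D p.1) : ℕ) := by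
              have hle := hqmin' p.1 h1
              have hne : (δ : ℕ) ≠ ((D p.1) : ℕ) := fun hh => h3 (Fin.ext hh.symm)
              omega
            have h0 : wNext t w nH δ (D p.1) = w (D p.1) := by
              unfold wNext
              rw [if_pos hgt]
            rw [h0]
            exact hlb p.1
    have hconsH : ∀ p p' (s : Fin t), DH p = DH p' → lbH p = lbH p' →
        (s : ℕ) + 1 = (DH p : ℕ) → AH p s = AH p' s := by
      intro p p' s hD hlb' hs
      by_cases h1 : (D p.1 : ℕ) = 0
      · exfalso
        simp only [hDHdef, if_pos h1] at hs
        simp at hs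
      · by_cases h1' : (D p'.1 : ℕ) = 0
        · exfalso
          rw [hD] at hs
          simp only [hDHdef, if_pos h1'] at hs
          simp at hs
        · by_cases h2 : D p.1 = δ ∧ lb p.1 = lb q
          · by_cases h2' : D p'.1 = δ ∧ lb p'.1 = lb q
            · have hpp : p = p' := by
                refine henc_inj p p' ?_
                simpa only [hlbHdef, if_neg h1, if_pos h2, if_neg h1', if_pos h2'] using hlb'
              rw [hpp]
            · exfalso
              simp only [hDHdef, if_neg h1, if_pos h2, if_neg h1', if_neg h2'] at hD
              rw [Fin.ext_iff] at hD
              simp at hD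
              have hle := hqmin' p'.1 h1'
              omega
          · by_cases h2' : D p'.1 = δ ∧ lb p'.1 = lb q
            · exfalso
              simp only [hDHdef, if_neg h1, if_neg h2, if_neg h1', if_pos h2'] at hD
              rw [Fin.ext_iff] at hD
              simp at hD
              have hle := hqmin' p.1 h1
              omega
            · -- both in the plain branch
              simp only [hDHdef, if_neg h1, if_neg h2, if_neg h1', if_neg h2'] at hD hs
              simp only [hlbHdef, if_neg h1, if_neg h2, if_neg h1', if_neg h2'] at hlb'
              have hlbeq : lb p.1 = lb p'.1 := by
                by_cases h3 : D p.1 = δ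
                · have h3' : D p'.1 = δ := by rw [← hD]; exact h3
                  rw [if_pos h3] at hlb'
                  rw [if_pos h3'] at hlb'
                  have hnep : lb p.1 ≠ lb q := fun hh => h2 ⟨h3, hh⟩
                  have hnep' : lb p'.1 ≠ lb q := fun hh => h2' ⟨h3', hh⟩
                  split_ifs at hlb' with ha hb hcc <;> omega
                · have h3' : ¬ (D p'.1 = δ) := by rw [← hD]; exact h3
                  rw [if_neg h3, if_neg h3'] at hlb'
                  exact hlb'
              simp only [hAHdef, if_neg h1, if_neg h1']
              rw [derT_apply_top _ _ _ _ (fun s' hs' => hA p.1 s' (by omega))]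
              rw [derT_apply_top _ _ _ _ (fun s' hs' => hA p'.1 s' (by rw [← hD]; omega))]
              rw [hcons p.1 p'.1 s hD hlbeq hs]
    -- outer application
    have hCstcard : Fintype.card (↥PF → C) ≤ cstar := by
      have h1 : Fintype.card (↥PF → C) = Fintype.card C ^ Fintype.card ↥PF := Fintype.card_fun
      rw [h1, Fintype.card_coe]
      calc Fintype.card C ^ PF.card ≤ c ^ PF.card := Nat.pow_le_pow_left hC _
        _ ≤ c ^ SZ := Nat.pow_le_pow_right hc hPFcard
    obtain ⟨Tu, ystar, hTu, hyst, Hwin⟩ := hkB δ hwδ R M (ι × Finset (Fin kR)) hcardH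
      AH DH lbH hAH hlbH hconsH rL (↥PF → C) hCstcard
      (fun x σ => d (x + (σ : M)))
    set u := ∑ ℓ ∈ Tu, rL ℓ with hu
    have OUT : ∀ (i : ι), (D i : ℕ) ≠ 0 → ∀ (T : Finset (Fin kR)), ∀ σ ∈ PF,
        d (ystar + (evalT (A i) (u + eT T) - evalT (A i) (eT T) - evalT (A q) u) + σ)
          = d (ystar + σ) := by
      intro i hi T σ hσ
      have h := congrFun (Hwin (i, T)) ⟨σ, hσ⟩
      have hAHa : AH (i, T) = derT (A i) (A q) (eT T) := by
        simp only [hAHdef, if_neg hi]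
      rw [hAHa, evalT_derT] at h
      exact h
    -- inner application
    rcases HR R M ι hcard A D lb hA hlb hcons rR C hC (fun x => d (ystar + x)) with hwin | hstruct
    · -- propagate inner win
      obtain ⟨T', y', hT', hy', hwin'⟩ := hwin
      refine Or.inl ⟨T'.map embR, ystar + y', Finset.map_nonempty.2 hT', ?_, ?_⟩
      · have hb : tset AH ⊆ derCl (tset A) (fsF r) 1 := by
          intro x hx
          rcases Finset.mem_insert.1 hx with hx0 | hxi
          · subst hx0
            have h0 := derT_mem_derCl (j := 0)
              (zero_mem_tset A (t := t) (M := M)) (zero_mem_tset A) (zero_mem_fsF r)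
            rw [derT_self_zero] at h0
            exact h0
          · obtain ⟨p, -, rfl⟩ := Finset.mem_image.1 hxi
            by_cases hD0 : (D p.1 : ℕ) = 0
            · have hAH0 : AH p = (fun _ => 0) := by simp only [hAHdef, if_pos hD0]
              rw [hAH0]
              have h0 := derT_mem_derCl (j := 0)
                (zero_mem_tset A (t := t) (M := M)) (zero_mem_tset A) (zero_mem_fsF r)
              rw [derT_self_zero] at h0
              exact h0
            · have hAHp : AH p = derT (A p.1) (A q) (eT p.2) := by
                simp only [hAHdef, if_neg hD0]
              rw [hAHp]
              refine derT_mem_derCl (j := 0) (apply_mem_tset A p.1) (apply_mem_tset A q) ?_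
              exact fsF_comp_subset r embR (sum_mem_fsF rR p.2)
        have h1 : ystar ∈ spanF (tset A) (fsF r) ((kB δ).2 + 1) :=
          spanF_transport hb (fsF_comp_subset r embL) (tset_nonempty A) ⟨0, zero_mem_fsF r⟩ hyst
        have h2 : y' ∈ spanF (tset A) (fsF r) BR :=
          spanF_mono (Finset.Subset.refl _) (fsF_comp_subset r embR) (le_refl BR)
            (tset_nonempty A) ⟨0, zero_mem_fsF r⟩ hy'
        refine spanF_mono (Finset.Subset.refl _) (Finset.Subset.refl _) (by omega)
          (tset_nonempty A) ⟨0, zero_mem_fsF r⟩ (spanF_add_mem h1 h2)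
      · intro i
        have := hwin' i
        have hsum : ∑ ℓ ∈ T'.map embR, r ℓ = ∑ ℓ ∈ T', rR ℓ := by
          rw [Finset.sum_map]; rfl
        rw [hsum]
        rw [add_assoc]
        exact this
    · -- extend structure
      obtain ⟨f, i₀, v, hf, hi₀, hvne, hmonoS, hinj⟩ := hstruct
      set sv : Fin m → R := fun a => ∑ ℓ ∈ v a, rR ℓ with hsv
      set fhat : M := ystar - evalT (A q) u + f with hfhat
      have hb : tset AH ⊆ derCl (tset A) (fsF r) 1 := by
        intro x hx
        rcases Finset.mem_insert.1 hx with hx0 | hxi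
        · subst hx0
          have h0 := derT_mem_derCl (j := 0)
            (zero_mem_tset A (t := t) (M := M)) (zero_mem_tset A) (zero_mem_fsF r)
          rw [derT_self_zero] at h0
          exact h0
        · obtain ⟨p, -, rfl⟩ := Finset.mem_image.1 hxi
          by_cases hD0 : (D p.1 : ℕ) = 0
          · have hAH0 : AH p = (fun _ => 0) := by simp only [hAHdef, if_pos hD0]
            rw [hAH0]
            have h0 := derT_mem_derCl (j := 0)
              (zero_mem_tset A (t := t) (M := M)) (zero_mem_tset A) (zero_mem_fsF r)
            rw [derT_self_zero] at h0
            exact h0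
          · have hAHp : AH p = derT (A p.1) (A q) (eT p.2) := by
              simp only [hAHdef, if_neg hD0]
            rw [hAHp]
            refine derT_mem_derCl (j := 0) (apply_mem_tset A p.1) (apply_mem_tset A q) ?_
            exact fsF_comp_subset r embR (sum_mem_fsF rR p.2)
      have hyst' : ystar ∈ spanF (tset A) (fsF r) ((kB δ).2 + 1) :=
        spanF_transport hb (fsF_comp_subset r embL) (tset_nonempty A) ⟨0, zero_mem_fsF r⟩ hyst
      have hfR : f ∈ spanF (tset A) (fsF r) BR :=
        spanF_mono (Finset.Subset.refl _) (fsF_comp_subset r embR) (le_refl BR)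
          (tset_nonempty A) ⟨0, zero_mem_fsF r⟩ hf
      have humem : u ∈ fsF r := fsF_comp_subset r embL (sum_mem_fsF rL Tu)
      have hQu : -(evalT (A q) u) ∈ spanF (tset A) (fsF r) 1 := by
        have h2 := smul_evalT_mem_spanF (ε := -1) (B := 0)
          (by simp) (apply_mem_tset A q) humem
        have h3 : (-1 : ℤ) • evalT (A q) u = -(evalT (A q) u) := by simp
        rw [h3] at h2
        exact h2
      have hfhat_mem : fhat ∈ spanF (tset A) (fsF r) (BH + BR + 3) := by
        have h4 := spanF_add_mem (spanF_add_mem hyst' hQu) hfR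
        have h5 : fhat = ystar + -(evalT (A q) u) + f := by rw [hfhat, sub_eq_add_neg]
        rw [h5]
        refine spanF_mono (Finset.Subset.refl _) (Finset.Subset.refl _) (by omega)
          (tset_nonempty A) ⟨0, zero_mem_fsF r⟩ h4
      have hOLD : ∀ (a : Fin m) (i : ι), (D i : ℕ) ≠ 0 →
          d (fhat + evalT (A i) (u + sv a)) = d (ystar + (f + evalT (A i) (sv a))) := by
        intro a i hi
        have hmem : f + evalT (A i) (sv a) ∈ PF := by
          have h2 := smul_evalT_mem_spanF (ε := 1) (B := 0)
            (by simp) (apply_mem_tset A i) (sum_mem_fsF rR (v a))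
          have h3 : (1 : ℤ) • evalT (A i) (sv a) = evalT (A i) (sv a) := one_smul _ _
          rw [h3] at h2
          exact spanF_add_mem hf h2
        have h := OUT i hi (v a) _ hmem
        have harg : fhat + evalT (A i) (u + sv a) =
            ystar + (evalT (A i) (u + sv a) - evalT (A i) (sv a) - evalT (A q) u)
              + (f + evalT (A i) (sv a)) := by
          rw [hfhat]; abel
        rw [harg]
        exact h
      have hNEW : ∀ (i : ι), (D i : ℕ) ≠ 0 →
          d (fhat + evalT (A i) u) = d (ystar + f) := by
        intro i hi
        have hmem : f ∈ PF :=
          spanF_mono (Finset.Subset.refl _) (Finset.Subset.refl _) (Nat.le_succ BR)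
            (tset_nonempty A) ⟨0, zero_mem_fsF rR⟩ hf
        have h := OUT i hi ∅ f hmem
        have h0 : eT (∅ : Finset (Fin kR)) = 0 := Finset.sum_empty
        rw [h0, add_zero, evalT_zero, sub_zero] at h
        have harg : fhat + evalT (A i) u =
            ystar + (evalT (A i) u - evalT (A q) u) + f := by
          rw [hfhat]; abel
        rw [harg]
        exact h
      set vh : Fin (m+1) → Finset (Fin (KH + kR)) :=
        Fin.snoc (fun a => Tu.map embL ∪ (v a).map embR) (Tu.map embL) with hvh
      have hsumL : ∑ ℓ ∈ Tu.map embL, r ℓ = u := by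
        rw [Finset.sum_map]; rfl
      have hsumR : ∀ a : Fin m, ∑ ℓ ∈ (v a).map embR, r ℓ = sv a := by
        intro a; rw [Finset.sum_map]; rfl
      have hvh_sum : ∀ a : Fin (m+1), ∑ ℓ ∈ vh a, r ℓ =
          (Fin.snoc (fun a => u + sv a) u : Fin (m+1) → R) a := by
        intro a
        induction a using Fin.lastCases with
        | last =>
          rw [Fin.snoc_last]
          have : vh (Fin.last m) = Tu.map embL := by rw [hvh, Fin.snoc_last]
          rw [this, hsumL]
        | cast a' =>
          rw [Fin.snoc_castSucc]
          have : vh (Fin.castSucc a') = Tu.map embL ∪ (v a').map embR := by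
            rw [hvh, Fin.snoc_castSucc]
          rw [this, Finset.sum_union (hdisj Tu (v a')), hsumL, hsumR]
      have hvh_ne : ∀ a : Fin (m+1), (vh a).Nonempty := by
        intro a
        induction a using Fin.lastCases with
        | last =>
          have : vh (Fin.last m) = Tu.map embL := by rw [hvh, Fin.snoc_last]
          rw [this]
          exact Finset.map_nonempty.2 hTu
        | cast a' =>
          have : vh (Fin.castSucc a') = Tu.map embL ∪ (v a').map embR := by
            rw [hvh, Fin.snoc_castSucc]
          rw [this]
          exact (Finset.map_nonempty.2 hTu).inl
      -- colour of each configuration point of the new structure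
      have hcfg : ∀ (a : Fin (m+1)) (i : ι), (D i : ℕ) ≠ 0 →
          d (fhat + evalT (A i) (∑ ℓ ∈ vh a, r ℓ)) =
          (Fin.snoc (fun a => d (ystar + (f + evalT (A i) (sv a)))) (d (ystar + f))
            : Fin (m+1) → C) a := by
        intro a i hi
        rw [hvh_sum a]
        induction a using Fin.lastCases with
        | last => rw [Fin.snoc_last, Fin.snoc_last]; exact hNEW i hi
        | cast a' => rw [Fin.snoc_castSucc, Fin.snoc_castSucc]; exact hOLD a' i hi
      have hqq : ∀ (a : Fin (m+1)) (i : ι), (D i : ℕ) ≠ 0 →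
          d (fhat + evalT (A i) (∑ ℓ ∈ vh a, r ℓ)) =
          d (fhat + evalT (A i₀) (∑ ℓ ∈ vh a, r ℓ)) := by
        intro a i hi
        rw [hcfg a i hi, hcfg a i₀ hi₀]
        induction a using Fin.lastCases with
        | last => rw [Fin.snoc_last, Fin.snoc_last]
        | cast a' =>
          rw [Fin.snoc_castSucc, Fin.snoc_castSucc]
          have := hmonoS a' i hi
          exact this
      by_cases hwc : ∃ a : Fin (m+1), d fhat = d (fhat + evalT (A i₀) (∑ ℓ ∈ vh a, r ℓ))
      · -- win
        obtain ⟨a, ha⟩ := hwc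
        refine Or.inl ⟨vh a, fhat, hvh_ne a, hfhat_mem, ?_⟩
        intro i
        by_cases hi : (D i : ℕ) = 0
        · rw [evalT_eq_zero (fun s => hA i s (by rw [hi]; exact Nat.zero_le _)), add_zero]
        · rw [hqq a i hi, ← ha]
      · -- new structure
        push_neg at hwc
        refine Or.inr ⟨fhat, i₀, vh, hfhat_mem, hi₀, hvh_ne, hqq, ?_⟩
        have hχ : ∀ a : Fin (m+1), d (fhat + evalT (A i₀) (∑ ℓ ∈ vh a, r ℓ)) =
            (Fin.snoc (fun a => d (ystar + (f + evalT (A i₀) (sv a)))) (d (ystar + f))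
              : Fin (m+1) → C) a := by
          intro a
          exact hcfg a i₀ hi₀
        have hFG : (Fin.cons (d fhat) (fun a => d (fhat + evalT (A i₀) (∑ ℓ ∈ vh a, r ℓ)))
              : Fin (m+2) → C) =
            Fin.cons (d fhat) (Fin.snoc (fun a => d (ystar + (f + evalT (A i₀) (sv a))))
              (d (ystar + f))) := by
          funext x
          induction x using Fin.cases with
          | zero => rw [Fin.cons_zero, Fin.cons_zero]
          | succ j => rw [Fin.cons_succ, Fin.cons_succ]; exact hχ j
        rw [hFG]
        refine cons_snoc_inj ?_ ?_
        · exact hinj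
        · intro a heq
          exact (hwc a) (heq.trans (hχ a).symm)
  · -- all declared degrees are zero : trivial win
    push_neg at hex
    refine Or.inl ⟨{⟨0, by omega⟩}, 0, ⟨_, Finset.mem_singleton_self _⟩, ?_, ?_⟩
    · exact zero_mem_spanF _ (tset_nonempty A) ⟨0, zero_mem_fsF r⟩
    · intro i
      rw [evalT_eq_zero (fun s => hA i s (by rw [hex i]; exact Nat.zero_le _)), add_zero]

end Step

section Assemble

theorem RS_all (t : ℕ) (w : Fin (t+1) → ℕ) : ∀ n m, RS t w n m := by
  refine (lexLt_wf t).induction (C := fun w => ∀ n m, RS t w n m) w ?_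
  intro w IHw n m
  induction m with
  | zero => exact RS_zero t w n
  | succ m ihm =>
    exact RS_succ t w n m (fun w' hw' n' => AS_of_RS (fun m' => IHw w' hw' n' m')) ihm

theorem AS_all (t : ℕ) (w : Fin (t+1) → ℕ) (n : ℕ) : AS t w n :=
  AS_of_RS (RS_all t w n)

theorem poly_eval_eq {R : Type} [CommRing R] (P : Polynomial R) (t : ℕ)
    (h1 : P.natDegree ≤ t) (h2 : P.coeff 0 = 0) (z : R) :
    P.eval z = ∑ s : Fin t, z ^ ((s : ℕ) + 1) * P.coeff ((s : ℕ) + 1) := by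
  have h := Polynomial.eval_eq_sum_range' (Nat.lt_succ_of_le h1) z
  rw [h, Finset.sum_range_succ' (fun i => P.coeff i * z ^ i) t, h2, zero_mul, add_zero]
  rw [Fin.sum_univ_eq_sum_range (fun s => z ^ (s + 1) * P.coeff (s + 1)) t]
  exact Finset.sum_congr rfl fun i _ => mul_comm _ _

end Assemble

theorem statement7 (t n mStar c : ℕ) (ht : 0 < t) (hn : 0 < n) (hm : 0 < mStar)
    (hc : 0 < c) :
    ∃ k : ℕ, 0 < k ∧
      ∀ (R : Type) [CommRing R],
      ∀ (Λ : Type) [Fintype Λ], Fintype.card Λ = n →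
      ∀ p : Λ → Fin mStar → Polynomial R,
        (∀ α j, (p α j).natDegree ≤ t ∧ (p α j).coeff 0 = 0) →
      ∀ r : Fin k → R,
      ∀ (C : Type) [Fintype C], Fintype.card C ≤ c →
      ∀ d : (Fin mStar → R) → C,
      ∃ (y : Fin mStar → R) (w : Finset (Fin k)), w.Nonempty ∧
        ∀ α β : Λ,
          d (fun j => y j + (p α j).eval (∑ ℓ ∈ w, r ℓ)) =
          d (fun j => y j + (p β j).eval (∑ ℓ ∈ w, r ℓ)) := by
  classical
  obtain ⟨k, B, hk, main⟩ := AS_all t (fun s => if (s : ℕ) = t then n else 0) n c hc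
  refine ⟨k, hk, ?_⟩
  intro R instR Λ instΛ hcard p hp r C instC hC d
  have hne : Nonempty Λ := Fintype.card_pos_iff.1 (by omega)
  obtain ⟨α₀⟩ := hne
  set A : Λ → Fin t → (Fin mStar → R) := fun α s => fun j =>
    (p α j).coeff ((s : ℕ) + 1) - (p α₀ j).coeff ((s : ℕ) + 1) with hAdef
  have hmain := main R (Fin mStar → R) Λ hcard A (fun _ => Fin.last t)
    (fun α => ((Fintype.equivFin Λ) α : ℕ))
    (fun i s hs => absurd hs (by have := s.isLt; simp only [Fin.val_last]; omega))
    (fun i => by simp only [Fin.val_last, if_pos rfl]; rw [← hcard]; exact ((Fintype.equivFin Λ) i).isLt)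
    (fun i j s _ hlb _ => by rw [(Fintype.equivFin Λ).injective (Fin.ext hlb)])
    r C hC d
  obtain ⟨T, y, hT, -, hwin⟩ := hmain
  set z := ∑ ℓ ∈ T, r ℓ with hz
  refine ⟨fun j => y j - (p α₀ j).eval z, T, hT, ?_⟩
  have key : ∀ α : Λ, (fun j => (y j - (p α₀ j).eval z) + (p α j).eval z)
      = y + evalT (A α) z := by
    intro α
    funext j
    have hevalα := poly_eval_eq (p α j) t (hp α j).1 (hp α j).2 z
    have hevalα₀ := poly_eval_eq (p α₀ j) t (hp α₀ j).1 (hp α₀ j).2 z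
    have hev : (evalT (A α) z : Fin mStar → R) j = (p α j).eval z - (p α₀ j).eval z := by
      unfold evalT
      rw [Finset.sum_apply]
      rw [hevalα, hevalα₀, ← Finset.sum_sub_distrib]
      refine Finset.sum_congr rfl fun s _ => ?_
      rw [Pi.smul_apply, smul_eq_mul, hAdef]
      ring
    show (y j - (p α₀ j).eval z) + (p α j).eval z = y j + (evalT (A α) z) j
    rw [hev]
    ring
  intro α β
  show d (fun j => (y j - (p α₀ j).eval z) + (p α j).eval z)
      = d (fun j => (y j - (p α₀ j).eval z) + (p β j).eval z)
  have hα := hwin α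
  have hβ := hwin β
  rw [← key α] at hα
  rw [← key β] at hβ
  calc d (fun j => (y j - (p α₀ j).eval z) + (p α j).eval z) = d y := hα
    _ = d (fun j => (y j - (p α₀ j).eval z) + (p β j).eval z) := hβ.symm
end
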